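/- arXiv:1810.01828 — 6 statements merged into one kernel-verified Lean document; each statement's English description precedes it below -/
import Mathlib

section
/- Let (Br_j)_{j≥0} be a sequence of finite nonempty sets with Br_0 = {v_0} a singleton and let {A^(j)} be a projective matrix system over (Br_j). Then lim_j A^(j) is a closed convex cone in ∏_{j≥0} [0,∞)^{Br_j} which is locally compact, and for every nonempty compact subset K ⊆ [0,∞) the set { (ψ^j)_{j≥0} ∈ lim_j A^(j) : ψ^0 ∈ K } is a nonempty compact subset of lim_j A^(j). -/
open scoped BigOperators
noncomputable section

open Classical in
/-- The matrix product `(A^(1) A^(2) ⋯ A^(k))_{v,w}`; here `A n` is the matrix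
`A^(n+1)` of a projective matrix system, from level `n` to level `n+1`. -/
def pathMat {L : ℕ → Type} [∀ n, Fintype (L n)]
    (A : ∀ n, L n → L (n+1) → ℝ) : ∀ k, L 0 → L k → ℝ
  | 0, v, w => if v = w then 1 else 0
  | (k+1), v, w => ∑ u, pathMat A k v u * A k u w

/-- The inverse limit `lim_j A^(j)` of a projective matrix system. -/
def InvLimit {L : ℕ → Type} [∀ n, Fintype (L n)]
    (A : ∀ n, L n → L (n+1) → ℝ) : Set (∀ n, L n → ℝ) :=
  {ψ | (∀ n v, 0 ≤ ψ n v) ∧ ∀ n v, ψ n v = ∑ w, A n v w * ψ (n+1) w}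

/-- A projective matrix system: nonnegative entries and
`(A^(1) ⋯ A^(k))_{v₀,w} ≠ 0` for all `k` and `w`. -/
def IsProjSystem {L : ℕ → Type} [∀ n, Fintype (L n)] (v0 : L 0)
    (A : ∀ n, L n → L (n+1) → ℝ) : Prop :=
  (∀ n v w, 0 ≤ A n v w) ∧ ∀ k (w : L k), pathMat A k v0 w ≠ 0

section Aux

variable {L : ℕ → Type} [∀ n, Fintype (L n)]

lemma pathMat_nonneg (A : ∀ n, L n → L (n+1) → ℝ) (hA : ∀ n v w, 0 ≤ A n v w) :
    ∀ k (v : L 0) (w : L k), 0 ≤ pathMat A k v w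
  | 0, v, w => by simp only [pathMat]; split <;> norm_num
  | (k+1), v, w => by
      simp only [pathMat]
      exact Finset.sum_nonneg fun u _ =>
        mul_nonneg (pathMat_nonneg A hA k v u) (hA k u w)

lemma sum_pathMat_eq (A : ∀ n, L n → L (n+1) → ℝ) (v0 : L 0) (ψ : ∀ n, L n → ℝ) :
    ∀ k, (∀ n, n < k → ∀ v, ψ n v = ∑ w, A n v w * ψ (n+1) w) →
      ψ 0 v0 = ∑ w, pathMat A k v0 w * ψ k w
  | 0, _ => by
      simp only [pathMat, ite_mul, one_mul, zero_mul]
      rw [Finset.sum_eq_single v0 (fun b _ hb => if_neg (Ne.symm hb))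
        (fun h => absurd (Finset.mem_univ v0) h), if_pos rfl]
  | (k+1), h => by
      calc ψ 0 v0 = ∑ u, pathMat A k v0 u * ψ k u :=
            sum_pathMat_eq A v0 ψ k (fun n hn => h n (Nat.lt_succ_of_lt hn))
        _ = ∑ u, ∑ w, pathMat A k v0 u * (A k u w * ψ (k+1) w) := by
            refine Finset.sum_congr rfl fun u _ => ?_
            rw [h k (Nat.lt_succ_self k) u, Finset.mul_sum]
        _ = ∑ w, ∑ u, pathMat A k v0 u * (A k u w * ψ (k+1) w) := Finset.sum_comm
        _ = ∑ w, pathMat A (k+1) v0 w * ψ (k+1) w := by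
            refine Finset.sum_congr rfl fun w _ => ?_
            simp only [pathMat, Finset.sum_mul, mul_assoc]

/-- Existence of a "partial solution": a nonnegative family satisfying the
recursion below level `k`, with prescribed level-`k` value and vanishing above. -/
lemma exists_partial (A : ∀ n, L n → L (n+1) → ℝ) (hA : ∀ n v w, 0 ≤ A n v w) :
    ∀ (k : ℕ) (x : L k → ℝ), (∀ w, 0 ≤ x w) →
      ∃ ψ : ∀ n, L n → ℝ, (∀ n v, 0 ≤ ψ n v) ∧
        (∀ n, n < k → ∀ v, ψ n v = ∑ w, A n v w * ψ (n+1) w) ∧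
        ψ k = x ∧ (∀ n, k < n → ψ n = 0) := by
  intro k
  induction k with
  | zero =>
      intro x hx
      refine ⟨Function.update (fun n => (0 : L n → ℝ)) 0 x, ?_, ?_, ?_, ?_⟩
      · intro n v
        rcases Nat.eq_zero_or_pos n with h | h
        · subst h; simpa using hx v
        · rw [Function.update_of_ne (Nat.pos_iff_ne_zero.mp h)]; exact le_rfl
      · intro n hn; omega
      · exact Function.update_self _ _ _
      · intro n hn; exact Function.update_of_ne (Nat.pos_iff_ne_zero.mp hn) _ _
  | succ k ih =>
      intro x hx
      obtain ⟨ψ, hpos, heq, hk, htop⟩ :=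
        ih (fun v => ∑ w, A k v w * x w)
          (fun v => Finset.sum_nonneg fun w _ => mul_nonneg (hA k v w) (hx w))
      refine ⟨Function.update ψ (k+1) x, ?_, ?_, ?_, ?_⟩
      · intro n v
        rcases eq_or_ne n (k+1) with h | h
        · subst h; rw [Function.update_self]; exact hx v
        · rw [Function.update_of_ne h]; exact hpos n v
      · intro n hn v
        rcases eq_or_ne n k with h | h
        · subst h
          rw [Function.update_of_ne (by omega), Function.update_self, hk]
        · have hnk : n < k := lt_of_le_of_ne (Nat.lt_succ_iff.mp hn) h
          rw [Function.update_of_ne (by omega : n ≠ k+1),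
            Function.update_of_ne (by omega : n + 1 ≠ k+1)]
          exact heq n hnk v
      · exact Function.update_self _ _ _
      · intro n hn
        rw [Function.update_of_ne (by omega : n ≠ k+1)]
        exact htop n (by omega)

variable (v0 : L 0) (A : ∀ n, L n → L (n+1) → ℝ)

lemma pathMat_pos (hA : IsProjSystem v0 A) (k : ℕ) (w : L k) :
    0 < pathMat A k v0 w :=
  lt_of_le_of_ne (pathMat_nonneg A hA.1 k v0 w) (Ne.symm (hA.2 k w))

lemma eval_continuous (n : ℕ) (v : L n) :
    Continuous fun ψ : ∀ m, L m → ℝ => ψ n v :=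
  (continuous_apply v).comp (continuous_apply n)

lemma invLimit_isClosed : IsClosed (InvLimit A) := by
  have : InvLimit A =
      (⋂ n, ⋂ v : L n, {ψ : ∀ m, L m → ℝ | 0 ≤ ψ n v}) ∩
      (⋂ n, ⋂ v : L n, {ψ : ∀ m, L m → ℝ | ψ n v = ∑ w, A n v w * ψ (n+1) w}) := by
    ext ψ
    simp only [InvLimit, Set.mem_setOf_eq, Set.mem_inter_iff, Set.mem_iInter]
  rw [this]
  refine IsClosed.inter ?_ ?_
  · exact isClosed_iInter fun n => isClosed_iInter fun v =>
      isClosed_le continuous_const (eval_continuous n v)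
  · exact isClosed_iInter fun n => isClosed_iInter fun v =>
      isClosed_eq (eval_continuous n v)
        (continuous_finset_sum _ fun w _ =>
          continuous_const.mul (eval_continuous (n+1) w))

lemma invLimit_bound (hA : IsProjSystem v0 A) {ψ : ∀ n, L n → ℝ}
    (hψ : ψ ∈ InvLimit A) (k : ℕ) (w : L k) :
    pathMat A k v0 w * ψ k w ≤ ψ 0 v0 := by
  rw [sum_pathMat_eq A v0 ψ k (fun n _ v => hψ.2 n v)]
  exact Finset.single_le_sum
    (fun u _ => mul_nonneg (pathMat_nonneg A hA.1 k v0 u) (hψ.1 k u))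
    (Finset.mem_univ w)

/-- The key compactness statement. -/
lemma invLimit_compact_slice (hA : IsProjSystem v0 A) {M : ℝ} :
    IsCompact {ψ ∈ InvLimit A | ψ 0 v0 ≤ M} := by
  have hbox : IsCompact (Set.pi Set.univ fun n =>
      (Set.pi Set.univ fun w : L n => Set.Icc (0:ℝ) (M / pathMat A n v0 w))) :=
    isCompact_univ_pi fun n => isCompact_univ_pi fun w => isCompact_Icc
  refine hbox.of_isClosed_subset ?_ ?_
  · exact IsClosed.inter (invLimit_isClosed A)
      (isClosed_le (eval_continuous 0 v0) continuous_const)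
  · rintro ψ ⟨hψ, hM⟩
    rw [Set.mem_univ_pi]
    intro n
    rw [Set.mem_univ_pi]
    intro w
    refine ⟨hψ.1 n w, ?_⟩
    rw [le_div_iff₀ (pathMat_pos v0 A hA n w), mul_comm]
    exact le_trans (invLimit_bound v0 A hA hψ n w) hM

/-- There is an element of the inverse limit whose root coordinate is `1`. -/
lemma invLimit_exists_one [∀ n, Nonempty (L n)] (hA : IsProjSystem v0 A) :
    ∃ ψ ∈ InvLimit A, ψ 0 v0 = 1 := by
  classical
  set B : Set (∀ n, L n → ℝ) := Set.pi Set.univ fun n =>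
      (Set.pi Set.univ fun w : L n => Set.Icc (0:ℝ) (1 / pathMat A n v0 w)) with hB
  have hBc : IsCompact B :=
    isCompact_univ_pi fun n => isCompact_univ_pi fun w => isCompact_Icc
  set D : ℕ → Set (∀ n, L n → ℝ) := fun N =>
    {ψ ∈ B | ψ 0 v0 = 1 ∧ ∀ n, n < N → ∀ v, ψ n v = ∑ w, A n v w * ψ (n+1) w}
    with hD
  have hDclosed : ∀ N, IsClosed (D N) := by
    intro N
    have hrepr : D N = B ∩ ({ψ : ∀ n, L n → ℝ | ψ 0 v0 = 1} ∩
        ⋂ n, ⋂ (_ : n < N), ⋂ v : L n,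
          {ψ : ∀ m, L m → ℝ | ψ n v = ∑ w, A n v w * ψ (n+1) w}) := by
      ext ψ
      simp only [hD, Set.mem_setOf_eq, Set.mem_inter_iff, Set.mem_iInter]
    rw [hrepr]
    refine hBc.isClosed.inter (IsClosed.inter ?_ ?_)
    · exact isClosed_eq (eval_continuous 0 v0) continuous_const
    · refine isClosed_iInter fun n => isClosed_iInter fun hn =>
        isClosed_iInter fun v => isClosed_eq (eval_continuous n v)
          (continuous_finset_sum _ fun w _ =>
            continuous_const.mul (eval_continuous (n+1) w))
  have hDsub : ∀ N, D (N+1) ⊆ D N := by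
    rintro N ψ ⟨h1, h2, h3⟩
    exact ⟨h1, h2, fun n hn v => h3 n (Nat.lt_succ_of_lt hn) v⟩
  have hDne : ∀ N, (D N).Nonempty := by
    intro N
    obtain ⟨w0⟩ : Nonempty (L N) := inferInstance
    have hc := pathMat_pos v0 A hA N w0
    set x : L N → ℝ := fun w => if w = w0 then 1 / pathMat A N v0 w0 else 0 with hx
    have hxnn : ∀ w, 0 ≤ x w := by
      intro w; simp only [hx]; split
      · positivity
      · exact le_rfl
    obtain ⟨ψ, hpos, heq, hkx, htop⟩ := exists_partial A hA.1 N x hxnn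
    have hroot : ψ 0 v0 = 1 := by
      rw [sum_pathMat_eq A v0 ψ N heq, hkx]
      simp only [hx, mul_ite, mul_zero]
      rw [Finset.sum_ite_eq' Finset.univ w0
        (fun w => pathMat A N v0 w * (1 / pathMat A N v0 w0))]
      simp [Finset.mem_univ, ne_of_gt hc]
    refine ⟨ψ, ⟨?_, hroot, heq⟩⟩
    -- ψ ∈ B
    rw [hB, Set.mem_univ_pi]
    intro n
    rw [Set.mem_univ_pi]
    intro w
    refine ⟨hpos n w, ?_⟩
    rcases le_or_gt n N with hn | hn
    · -- use the identity at level n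
      rw [le_div_iff₀ (pathMat_pos v0 A hA n w), mul_comm]
      have hid := sum_pathMat_eq A v0 ψ n (fun m hm v => heq m (lt_of_lt_of_le hm hn) v)
      calc pathMat A n v0 w * ψ n w
          ≤ ∑ u, pathMat A n v0 u * ψ n u :=
            Finset.single_le_sum
              (fun u _ => mul_nonneg (pathMat_nonneg A hA.1 n v0 u) (hpos n u))
              (Finset.mem_univ w)
        _ = ψ 0 v0 := (hid).symm
        _ = 1 := hroot
    · rw [htop n hn]
      simp only [Pi.zero_apply]
      have := pathMat_pos v0 A hA n w
      positivity
  have hinter : (⋂ N, D N).Nonempty := by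
    refine IsCompact.nonempty_iInter_of_sequence_nonempty_isCompact_isClosed D
      hDsub hDne ?_ hDclosed
    exact hBc.of_isClosed_subset (hDclosed 0) (fun ψ hψ => hψ.1)
  obtain ⟨ψ, hψ⟩ := hinter
  simp only [Set.mem_iInter] at hψ
  refine ⟨ψ, ⟨?_, ?_⟩, (hψ 0).2.1⟩
  · intro n v
    have := (hψ 0).1
    rw [hB, Set.mem_univ_pi] at this
    have h2 := this n
    rw [Set.mem_univ_pi] at h2
    exact (h2 v).1
  · intro n v
    exact (hψ (n+1)).2.2 n (Nat.lt_succ_self n) v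

end Aux

/-- Lemma 3.1 2): the inverse limit is a closed convex cone, it is locally compact,
and the subset of elements with top coordinate in a fixed nonempty compact
`K ⊆ [0,∞)` is nonempty and compact. -/
theorem stmt_1 {L : ℕ → Type} [∀ n, Fintype (L n)] [∀ n, Nonempty (L n)]
    (v0 : L 0) (hsing : ∀ v : L 0, v = v0)
    (A : ∀ n, L n → L (n+1) → ℝ) (hA : IsProjSystem v0 A) :
    IsClosed (InvLimit A) ∧
    Convex ℝ (InvLimit A) ∧
    (∀ ψ ∈ InvLimit A, ∀ φ ∈ InvLimit A, ψ + φ ∈ InvLimit A) ∧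
    (∀ ψ ∈ InvLimit A, ∀ t : ℝ, 0 ≤ t → t • ψ ∈ InvLimit A) ∧
    LocallyCompactSpace ↥(InvLimit A) ∧
    (∀ K : Set ℝ, K.Nonempty → IsCompact K → K ⊆ Set.Ici (0 : ℝ) →
      ({ψ ∈ InvLimit A | ψ 0 v0 ∈ K}.Nonempty ∧
        IsCompact {ψ ∈ InvLimit A | ψ 0 v0 ∈ K})) := by
  have hadd : ∀ ψ ∈ InvLimit A, ∀ φ ∈ InvLimit A, ψ + φ ∈ InvLimit A := by
    intro ψ hψ φ hφ
    refine ⟨fun n v => add_nonneg (hψ.1 n v) (hφ.1 n v), fun n v => ?_⟩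
    simp only [Pi.add_apply]
    rw [hψ.2 n v, hφ.2 n v, ← Finset.sum_add_distrib]
    exact Finset.sum_congr rfl fun w _ => by ring
  have hsmul : ∀ ψ ∈ InvLimit A, ∀ t : ℝ, 0 ≤ t → t • ψ ∈ InvLimit A := by
    intro ψ hψ t ht
    refine ⟨fun n v => ?_, fun n v => ?_⟩
    · simp only [Pi.smul_apply, smul_eq_mul]
      exact mul_nonneg ht (hψ.1 n v)
    · simp only [Pi.smul_apply, smul_eq_mul]
      rw [hψ.2 n v, Finset.mul_sum]
      exact Finset.sum_congr rfl fun w _ => by ring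
  have hclosed := invLimit_isClosed A
  have hKpart : ∀ K : Set ℝ, K.Nonempty → IsCompact K → K ⊆ Set.Ici (0 : ℝ) →
      ({ψ ∈ InvLimit A | ψ 0 v0 ∈ K}.Nonempty ∧
        IsCompact {ψ ∈ InvLimit A | ψ 0 v0 ∈ K}) := by
    intro K hne hKc hKpos
    constructor
    · obtain ⟨t, ht⟩ := hne
      obtain ⟨ψ, hψ, hψ1⟩ := invLimit_exists_one v0 A hA
      refine ⟨t • ψ, hsmul ψ hψ t (hKpos ht), ?_⟩
      simp only [Pi.smul_apply, smul_eq_mul, hψ1, mul_one]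
      exact ht
    · obtain ⟨M, _, hM⟩ := hKc.exists_isMaxOn hne continuous_id.continuousOn
      refine IsCompact.of_isClosed_subset (invLimit_compact_slice v0 A hA (M := M)) ?_ ?_
      · exact IsClosed.inter hclosed
          (IsClosed.preimage (eval_continuous 0 v0) hKc.isClosed)
      · rintro ψ ⟨h1, h2⟩
        exact ⟨h1, hM h2⟩
  refine ⟨hclosed, ?_, hadd, hsmul, ?_, hKpart⟩
  · intro ψ hψ φ hφ a b ha hb _
    exact hadd _ (hsmul ψ hψ a ha) _ (hsmul φ hφ b hb)
  · -- locally compact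
    haveI : WeaklyLocallyCompactSpace ↥(InvLimit A) := by
      refine ⟨fun x => ?_⟩
      set c : ℝ := x.1 0 v0 + 1 with hc
      set S : Set (∀ n, L n → ℝ) := {ψ ∈ InvLimit A | ψ 0 v0 ≤ c} with hS
      have hScomp : IsCompact S := invLimit_compact_slice v0 A hA
      refine ⟨(Subtype.val ⁻¹' S : Set ↥(InvLimit A)), ?_, ?_⟩
      · refine Subtype.isCompact_iff.mpr ?_
        have himg : (Subtype.val : ↥(InvLimit A) → ∀ n, L n → ℝ) ''
            ((Subtype.val : ↥(InvLimit A) → ∀ n, L n → ℝ) ⁻¹' S) = S := by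
          rw [Subtype.image_preimage_coe]
          exact Set.inter_eq_right.mpr fun ψ hψ => hψ.1
        rw [himg]
        exact hScomp
      · have hopen : IsOpen {ψ : ∀ n, L n → ℝ | ψ 0 v0 < c} :=
          isOpen_lt (eval_continuous 0 v0) continuous_const
        have hmem : Subtype.val ⁻¹' {ψ : ∀ n, L n → ℝ | ψ 0 v0 < c} ∈ nhds x := by
          refine continuous_subtype_val.continuousAt.preimage_mem_nhds ?_
          exact hopen.mem_nhds (by simp [hc])
        refine Filter.mem_of_superset hmem ?_
        rintro ⟨ψ, hψ⟩ h
        exact ⟨hψ, le_of_lt h⟩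
    exact WeaklyLocallyCompactSpace.locallyCompactSpace
end
end

section
/- Let X and Y be finite nonempty sets, let B = (B_{x,y})_{(x,y)∈X×Y} be a matrix with strictly positive entries and A = (A_{x,y})_{(x,y)∈X×Y} a matrix with nonnegative entries, and suppose there is ε with 0 ≤ ε < 1 such that A_{x,y}/B_{x,y} ≤ ε for all (x,y) ∈ X × Y. Then φ(B + A) ≥ (1 + ε)^{-2} φ(B), and if moreover all entries of B − A are strictly positive, then φ(B − A) ≥ (1 − ε)^2 φ(B). -/
open scoped BigOperators
noncomputable section

/-- `φ(B)` for a strictly positive matrix `B`: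
the minimum of `B_{x,y} B_{x',y'} / (B_{x',y} B_{x,y'})`. -/
def phi {X Y : Type} [Fintype X] [Fintype Y] (B : X → Y → ℝ) : ℝ :=
  ⨅ q : (X × X) × Y × Y, B q.1.1 q.2.1 * B q.1.2 q.2.2 / (B q.1.2 q.2.1 * B q.1.1 q.2.2)

/-- Lemma 3.3: if `A_{x,y}/B_{x,y} ≤ ε < 1` then `φ(B+A) ≥ (1+ε)⁻² φ(B)`,
and if `B − A` is strictly positive, `φ(B−A) ≥ (1−ε)² φ(B)`. -/
theorem stmt_3 {X Y : Type} [Fintype X] [Fintype Y] [Nonempty X] [Nonempty Y]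
    (B A : X → Y → ℝ) (hB : ∀ x y, 0 < B x y) (hA : ∀ x y, 0 ≤ A x y)
    (ε : ℝ) (hε0 : 0 ≤ ε) (hε1 : ε < 1)
    (h : ∀ x y, A x y / B x y ≤ ε) :
    ((1 + ε) ^ 2)⁻¹ * phi B ≤ phi (fun x y => B x y + A x y) ∧
    ((∀ x y, 0 < B x y - A x y) →
      (1 - ε) ^ 2 * phi B ≤ phi (fun x y => B x y - A x y)) := by
  have hbdd : BddBelow (Set.range fun q : (X × X) × Y × Y =>
      B q.1.1 q.2.1 * B q.1.2 q.2.2 / (B q.1.2 q.2.1 * B q.1.1 q.2.2)) :=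
    (Set.finite_range _).bddBelow
  have hAB : ∀ x y, A x y ≤ ε * B x y := fun x y => (div_le_iff₀ (hB x y)).1 (h x y)
  have h1ε : (0:ℝ) < 1 + ε := by linarith
  have h1ε2 : (0:ℝ) < (1 + ε) ^ 2 := by positivity
  constructor
  · apply le_ciInf
    rintro ⟨⟨x, x'⟩, y, y'⟩
    have hphi : phi B ≤ B x y * B x' y' / (B x' y * B x y') :=
      ciInf_le hbdd ⟨⟨x, x'⟩, y, y'⟩
    have hD : 0 < B x' y * B x y' := mul_pos (hB x' y) (hB x y')
    have key : ((1 + ε) ^ 2)⁻¹ * (B x y * B x' y' / (B x' y * B x y')) ≤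
        (B x y + A x y) * (B x' y' + A x' y') / ((B x' y + A x' y) * (B x y' + A x y')) := by
      have heq : ((1 + ε) ^ 2)⁻¹ * (B x y * B x' y' / (B x' y * B x y')) =
          B x y * B x' y' / ((1 + ε) ^ 2 * (B x' y * B x y')) := by
        field_simp
      rw [heq]
      apply div_le_div₀
      · have := hA x y; have := hA x' y'; have := (hB x y).le; have := (hB x' y').le
        nlinarith
      · nlinarith [hA x y, hA x' y', (hB x y).le, (hB x' y').le, mul_nonneg (hA x y) (hA x' y')]
      · have := hA x' y; have := hA x y'
        nlinarith [hB x' y, hB x y']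
      · have h1 : B x' y + A x' y ≤ (1 + ε) * B x' y := by nlinarith [hAB x' y]
        have h2 : B x y' + A x y' ≤ (1 + ε) * B x y' := by nlinarith [hAB x y']
        calc (B x' y + A x' y) * (B x y' + A x y')
            ≤ ((1 + ε) * B x' y) * ((1 + ε) * B x y') := by
              apply mul_le_mul h1 h2 (by nlinarith [hB x y', hA x y']) (mul_nonneg h1ε.le (hB x' y).le)
          _ = (1 + ε) ^ 2 * (B x' y * B x y') := by ring
    calc ((1 + ε) ^ 2)⁻¹ * phi B
        ≤ ((1 + ε) ^ 2)⁻¹ * (B x y * B x' y' / (B x' y * B x y')) := by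
          apply mul_le_mul_of_nonneg_left hphi (by positivity)
      _ ≤ _ := key
  · intro hBA
    apply le_ciInf
    rintro ⟨⟨x, x'⟩, y, y'⟩
    have hphi : phi B ≤ B x y * B x' y' / (B x' y * B x y') :=
      ciInf_le hbdd ⟨⟨x, x'⟩, y, y'⟩
    have hD : 0 < B x' y * B x y' := mul_pos (hB x' y) (hB x y')
    have h1ε' : (0:ℝ) < 1 - ε := by linarith
    have key : (1 - ε) ^ 2 * (B x y * B x' y' / (B x' y * B x y')) ≤
        (B x y - A x y) * (B x' y' - A x' y') / ((B x' y - A x' y) * (B x y' - A x y')) := by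
      rw [← mul_div_assoc]
      apply div_le_div₀
      · exact le_of_lt (mul_pos (hBA x y) (hBA x' y'))
      · have h1 : (1 - ε) * B x y ≤ B x y - A x y := by nlinarith [hAB x y]
        have h2 : (1 - ε) * B x' y' ≤ B x' y' - A x' y' := by nlinarith [hAB x' y']
        calc (1 - ε) ^ 2 * (B x y * B x' y')
            = ((1 - ε) * B x y) * ((1 - ε) * B x' y') := by ring
          _ ≤ (B x y - A x y) * (B x' y' - A x' y') :=
              mul_le_mul h1 h2 (mul_nonneg h1ε'.le (hB x' y').le) (hBA x y).le
      · exact mul_pos (hBA x' y) (hBA x y')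
      · apply mul_le_mul (by nlinarith [hA x' y]) (by nlinarith [hA x y'])
          (hBA x y').le (hB x' y).le
    calc (1 - ε) ^ 2 * phi B
        ≤ (1 - ε) ^ 2 * (B x y * B x' y' / (B x' y * B x y')) := by
          apply mul_le_mul_of_nonneg_left hphi (by positivity)
      _ ≤ _ := key
end
end

section
/- Let I ⊆ ℝ be an interval, i.e. a convex subset of ℝ (possibly empty, unbounded, or a single point). There exist sequences (s_j)_{j≥1} and (t_j)_{j≥1} of strictly positive real numbers such that for every β ∈ ℝ: ∑_{j=1}^∞ s_j e^{jβ} + ∑_{j=1}^∞ t_j e^{-jβ} < ∞ if and only if β ∈ I. -/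
open scoped BigOperators
noncomputable section

/-- Summability of the pure exponential series. -/
private lemma geom_exp_iff (x : ℝ) :
    (Summable fun j : ℕ => Real.exp (((j : ℝ) + 1) * x)) ↔ x < 0 := by
  have h : ∀ j : ℕ, Real.exp (((j : ℝ) + 1) * x) = Real.exp x * Real.exp x ^ j := by
    intro j
    rw [← Real.exp_nat_mul, ← Real.exp_add]
    ring_nf
  rw [summable_congr fun j => by rw [h j]]
  rw [summable_mul_left_iff (Real.exp_ne_zero x), summable_geometric_iff_norm_lt_one,
    Real.norm_eq_abs, abs_of_pos (Real.exp_pos x), Real.exp_lt_one_iff]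

private lemma exp_cube_bound {y : ℝ} (hy : 0 ≤ y) : (y / 3) ^ 3 ≤ Real.exp y := by
  have h1 : Real.exp y = Real.exp (y / 3) ^ 3 := by
    rw [← Real.exp_nat_mul]
    congr 1
    push_cast
    ring
  have h2 : y / 3 ≤ Real.exp (y / 3) := by
    have := Real.add_one_le_exp (y / 3); linarith
  rw [h1]
  exact pow_le_pow_left₀ (by positivity) h2 3

private lemma sq_exp_iff (x : ℝ) :
    (Summable fun j : ℕ => Real.exp (((j : ℝ) + 1) * x) / ((j : ℝ) + 1) ^ 2) ↔ x ≤ 0 := by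
  constructor
  · intro h
    by_contra hx
    push_neg at hx
    have hbound : ∀ j : ℕ, (x / 3) ^ 3 / 3 * ((j : ℝ) + 1) ≤
        Real.exp (((j : ℝ) + 1) * x) / ((j : ℝ) + 1) ^ 2 := by
      intro j
      have hj : (0 : ℝ) < (j : ℝ) + 1 := by positivity
      have hb := exp_cube_bound (y := ((j : ℝ) + 1) * x) (by positivity)
      rw [le_div_iff₀ (by positivity)]
      calc (x / 3) ^ 3 / 3 * ((j : ℝ) + 1) * ((j : ℝ) + 1) ^ 2
          = (((j : ℝ) + 1) * x / 3) ^ 3 / 3 := by ring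
        _ ≤ (((j : ℝ) + 1) * x / 3) ^ 3 := by
            have : (0:ℝ) ≤ (((j : ℝ) + 1) * x / 3) ^ 3 := by positivity
            linarith
        _ ≤ Real.exp (((j : ℝ) + 1) * x) := hb
    have hS : Summable (fun j : ℕ => (x / 3) ^ 3 / 3 * ((j : ℝ) + 1)) :=
      Summable.of_nonneg_of_le (fun j => by positivity) hbound h
    have hten := hS.tendsto_atTop_zero
    have hAT : Filter.Tendsto (fun j : ℕ => (x / 3) ^ 3 / 3 * ((j : ℝ) + 1))
        Filter.atTop Filter.atTop := by
      apply Filter.Tendsto.const_mul_atTop (by positivity)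
      exact Filter.tendsto_atTop_add_const_right _ 1 tendsto_natCast_atTop_atTop
    exact not_tendsto_nhds_of_tendsto_atTop hAT 0 hten
  · intro hx
    have hmaj : Summable (fun j : ℕ => 1 / ((j : ℝ) + 1) ^ 2) := by
      have := (Real.summable_one_div_nat_pow (p := 2)).mpr one_lt_two
      have h2 := (summable_nat_add_iff (f := fun n : ℕ => 1 / (n : ℝ) ^ 2) 1).mpr this
      refine h2.congr fun j => ?_
      push_cast; ring_nf
    refine Summable.of_nonneg_of_le (fun j => by positivity) (fun j => ?_) hmaj
    have hj : (0 : ℝ) < (j : ℝ) + 1 := by positivity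
    have h1 : Real.exp (((j : ℝ) + 1) * x) ≤ 1 :=
      (Real.exp_le_exp.mpr (by nlinarith)).trans_eq Real.exp_zero
    gcongr

private lemma all_exp (β : ℝ) :
    Summable fun j : ℕ => Real.exp (-(((j : ℝ) + 1) ^ 2) + ((j : ℝ) + 1) * β) := by
  have hmaj : Summable (fun j : ℕ => Real.exp ((β + 1) ^ 2 / 4) *
      (Real.exp (-1) * Real.exp (-1 : ℝ) ^ j)) := by
    apply Summable.mul_left
    apply Summable.mul_left
    rw [summable_geometric_iff_norm_lt_one, Real.norm_eq_abs,
      abs_of_pos (Real.exp_pos _), Real.exp_lt_one_iff]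
    norm_num
  refine Summable.of_nonneg_of_le (fun j => (Real.exp_pos _).le) (fun j => ?_) hmaj
  have heq : Real.exp ((β + 1) ^ 2 / 4) * (Real.exp (-1) * Real.exp (-1 : ℝ) ^ j)
      = Real.exp ((β + 1) ^ 2 / 4 + (-1) + (-1) * (j : ℝ)) := by
    rw [← Real.exp_nat_mul, ← Real.exp_add, ← Real.exp_add]
    ring_nf
  rw [heq]
  apply Real.exp_le_exp.mpr
  nlinarith [sq_nonneg ((j : ℝ) + 1 - (β + 1) / 2)]

open Classical in
private def inU (I : Set ℝ) (β : ℝ) : Prop :=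
  BddAbove I → (if sSup I ∈ I then β ≤ sSup I else β < sSup I)

private lemma inU_of_mem {I : Set ℝ} {β : ℝ} (h : β ∈ I) : inU I β := by
  intro hb
  split_ifs with hm
  · exact le_csSup hb h
  · exact lt_of_le_of_ne (le_csSup hb h) (fun he => hm (he ▸ h))

private lemma exists_ge_of_inU {I : Set ℝ} {β : ℝ} (hne : I.Nonempty) (h : inU I β) :
    ∃ y ∈ I, β ≤ y := by
  by_cases hb : BddAbove I
  · have h' := h hb
    split_ifs at h' with hm
    · exact ⟨sSup I, hm, h'⟩
    · obtain ⟨y, hy, hy'⟩ := exists_lt_of_lt_csSup hne h'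
      exact ⟨y, hy, hy'.le⟩
  · obtain ⟨y, hy, hy'⟩ := not_bddAbove_iff.mp hb β
    exact ⟨y, hy, hy'.le⟩

/-- The key one-sided construction. -/
private lemma upper (I : Set ℝ) :
    ∃ s : ℕ → ℝ, (∀ j : ℕ, 1 ≤ j → 0 < s j) ∧
      ∀ β : ℝ, (Summable fun j : ℕ => s (j + 1) * Real.exp (((j : ℝ) + 1) * β)) ↔ inU I β := by
  by_cases hb : BddAbove I
  · by_cases hm : sSup I ∈ I
    · refine ⟨fun j => Real.exp (-(j : ℝ) * sSup I) / (j : ℝ) ^ 2, fun j hj => ?_, fun β => ?_⟩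
      · have : (0:ℝ) < (j:ℝ) := by exact_mod_cast hj
        positivity
      · have hfun : ∀ j : ℕ,
            Real.exp (-((j + 1 : ℕ) : ℝ) * sSup I) / ((j + 1 : ℕ) : ℝ) ^ 2 *
              Real.exp (((j : ℝ) + 1) * β)
            = Real.exp (((j : ℝ) + 1) * (β - sSup I)) / ((j : ℝ) + 1) ^ 2 := by
          intro j
          rw [div_mul_eq_mul_div, ← Real.exp_add]
          push_cast
          ring_nf
        have hiff : (β - sSup I ≤ 0) ↔ inU I β := by
          unfold inU
          rw [if_pos hm]
          constructor
          · intro h _; linarith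
          · intro h; have := h hb; linarith
        exact (summable_congr hfun).trans ((sq_exp_iff _).trans hiff)
    · refine ⟨fun j => Real.exp (-(j : ℝ) * sSup I), fun j hj => Real.exp_pos _, fun β => ?_⟩
      have hfun : ∀ j : ℕ,
          Real.exp (-((j + 1 : ℕ) : ℝ) * sSup I) * Real.exp (((j : ℝ) + 1) * β)
          = Real.exp (((j : ℝ) + 1) * (β - sSup I)) := by
        intro j
        rw [← Real.exp_add]
        push_cast
        ring_nf
      have hiff : (β - sSup I < 0) ↔ inU I β := by
        unfold inU
        rw [if_neg hm]
        constructor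
        · intro h _; linarith
        · intro h; have := h hb; linarith
      exact (summable_congr hfun).trans ((geom_exp_iff _).trans hiff)
  · refine ⟨fun j => Real.exp (-(j : ℝ) ^ 2), fun j hj => Real.exp_pos _, fun β => ?_⟩
    have hfun : ∀ j : ℕ,
        Real.exp (-((j + 1 : ℕ) : ℝ) ^ 2) * Real.exp (((j : ℝ) + 1) * β)
        = Real.exp (-(((j : ℝ) + 1) ^ 2) + ((j : ℝ) + 1) * β) := by
      intro j
      rw [← Real.exp_add]
      push_cast
      ring_nf
    exact iff_of_true ((summable_congr hfun).mpr (all_exp β)) (fun hba => absurd hba hb)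

private lemma mem_iff_inU (I : Set ℝ) (hI : Convex ℝ I) (β : ℝ) :
    β ∈ I ↔ inU I β ∧ inU (-I) (-β) := by
  constructor
  · intro h
    exact ⟨inU_of_mem h, inU_of_mem (Set.neg_mem_neg.mpr h)⟩
  · rintro ⟨hU, hL⟩
    rcases Set.eq_empty_or_nonempty I with he | hne
    · exfalso
      subst he
      have h1 := hU bddAbove_empty
      have h2 := hL (by rw [Set.neg_empty]; exact bddAbove_empty)
      rw [if_neg (Set.notMem_empty _), Real.sSup_empty] at h1
      rw [Set.neg_empty, if_neg (Set.notMem_empty _), Real.sSup_empty] at h2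
      linarith
    · obtain ⟨y, hy, hby⟩ := exists_ge_of_inU hne hU
      obtain ⟨x', hx', hbx'⟩ := exists_ge_of_inU hne.neg hL
      have hx : -x' ∈ I := by simpa using hx'
      exact hI.ordConnected.out hx hy ⟨by linarith, hby⟩

/-- Lemma 4.5: for any interval `I ⊆ ℝ` there are sequences `(s_j)_{j≥1}`,
`(t_j)_{j≥1}` of strictly positive reals such that
`∑_{j≥1} s_j e^{jβ} + ∑_{j≥1} t_j e^{-jβ} < ∞` if and only if `β ∈ I`. -/
theorem stmt_6 (I : Set ℝ) (hI : Convex ℝ I) :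
    ∃ s t : ℕ → ℝ,
      (∀ j : ℕ, 1 ≤ j → 0 < s j) ∧ (∀ j : ℕ, 1 ≤ j → 0 < t j) ∧
      ∀ β : ℝ,
        ((Summable fun j : ℕ => s (j + 1) * Real.exp (((j : ℝ) + 1) * β)) ∧
          (Summable fun j : ℕ => t (j + 1) * Real.exp (-(((j : ℝ) + 1) * β)))) ↔
        β ∈ I := by
  obtain ⟨s, hs, hsiff⟩ := upper I
  obtain ⟨t, ht, htiff⟩ := upper (-I)
  refine ⟨s, t, hs, ht, fun β => ?_⟩
  have hrw : ∀ j : ℕ, t (j + 1) * Real.exp (-(((j : ℝ) + 1) * β))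
      = t (j + 1) * Real.exp (((j : ℝ) + 1) * (-β)) := by
    intro j
    rw [mul_neg]
  rw [mem_iff_inU I hI β]
  exact and_congr (hsiff β) ((summable_congr hrw).trans (htiff (-β)))
end
end

section
/- In the glued Bratteli diagram construction described below, fix k ≥ 1 and β ∈ I_k, and let ψ ∈ lim_j A^{(k,j)} be nonzero. Then there exists an element ψ̄ ∈ lim_j A^(j)(β) such that: (a) ψ̄^{k+i}_u = ψ^i_u for all i ≥ 0 and u ∈ Br^k_i; (b) ψ̄ vanishes at every vertex of Br that lies neither in Br^0 nor in Br^k; and (c) ψ̄_v ≤ φ_v at every vertex v of Br whenever φ ∈ lim_j A^(j)(β) satisfies φ^{k+i}_u ≥ ψ^i_u for all i ≥ 0 and u ∈ Br^k_i. -/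
open scoped BigOperators
noncomputable section

/-- `Ncnt B M v0k k i x` is the number `N(k)_x` of directed paths in the Bratteli
diagram `Br^k` (vertex sets `B k i`, multiplicities `M k i`, top vertex `v0k k`)
from the top vertex to the vertex `x` at level `i`. -/
def Ncnt (B : ℕ → ℕ → Finset ℕ) (M : ℕ → ℕ → ℕ → ℕ → ℕ) (v0k : ℕ → ℕ)
    (k : ℕ) : ℕ → ℕ → ℝ
  | 0, x => if x = v0k k then 1 else 0
  | i+1, y => ∑ x ∈ B k i, Ncnt B M v0k k i x * (M k i x y : ℝ)

/-- Level `n` of the glued Bratteli diagram `Br`: the disjoint union of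
`Br^0_n` and of `Br^k_{n-k}` for `1 ≤ k ≤ n`; a vertex is a pair
`(k, x)` with `x ∈ Br^k_{n-k}`. -/
def GV (B : ℕ → ℕ → Finset ℕ) (n : ℕ) : Finset (ℕ × ℕ) :=
  ({0} ×ˢ B 0 n) ∪ (Finset.range n).biUnion fun k => {k+1} ×ˢ B (k+1) (n - (k+1))

/-- `κ(2j) = j`, `κ(2j+1) = -j`. -/
def kappa (i : ℕ) : ℝ := if Even i then ((i / 2 : ℕ) : ℝ) else -((i / 2 : ℕ) : ℝ)

/-- The entries of the matrix `A^(n+1)(β)` of the glued diagram, on raw vertex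
pairs: within `Br^0` and within each `Br^k` the arrows have potential `0`, and
there are `m k i u` additional arrows with potential `κ(i)` from the chosen
vertex `W n = w_n ∈ Br^0_n` to each vertex `u ∈ Br^k_i` placed at level
`n+1 = k+i` of the glued diagram. -/
def GAraw (M : ℕ → ℕ → ℕ → ℕ → ℕ) (m : ℕ → ℕ → ℕ → ℕ) (W : ℕ → ℕ)
    (β : ℝ) (n : ℕ) (p q : ℕ × ℕ) : ℝ :=
  if p.1 = 0 ∧ q.1 = 0 then (M 0 n p.2 q.2 : ℝ)
  else if p.1 = 0 ∧ 1 ≤ q.1 then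
    (if p.2 = W n then (m q.1 (n + 1 - q.1) q.2 : ℝ) *
      Real.exp (-β * kappa (n + 1 - q.1)) else 0)
  else if p.1 = q.1 ∧ 1 ≤ p.1 then (M p.1 (n - p.1) p.2 q.2 : ℝ)
  else 0

/-- The projective matrix system `{A^(j)(β)}` of the glued Bratteli diagram. -/
def GAmat (B : ℕ → ℕ → Finset ℕ) (M : ℕ → ℕ → ℕ → ℕ → ℕ) (m : ℕ → ℕ → ℕ → ℕ)
    (W : ℕ → ℕ) (β : ℝ) (n : ℕ) : ↥(GV B n) → ↥(GV B (n+1)) → ℝ :=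
  fun p q => GAraw M m W β n p.val q.val

/-- The projective matrix system `{A^{(k,j)}}` of the component diagram `Br^k`
(zero potential, i.e. plain multiplicities). -/
def CompMat (B : ℕ → ℕ → Finset ℕ) (M : ℕ → ℕ → ℕ → ℕ → ℕ) (k : ℕ) :
    ∀ i : ℕ, ↥(B k i) → ↥(B k (i+1)) → ℝ :=
  fun i x y => (M k i x.val y.val : ℝ)


namespace Stmt8
open Finset

/-- `Q B M n d x y`: number of paths in `Br^0` from `x` at level `n` to `y` at level `n+d`. -/
def Q (B : ℕ → ℕ → Finset ℕ) (M : ℕ → ℕ → ℕ → ℕ → ℕ) : ℕ → ℕ → ℕ → ℕ → ℝ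
  | _, 0, x, y => if x = y then (1:ℝ) else 0
  | n, d+1, x, y => ∑ z ∈ B 0 (n+1), (M 0 n x z : ℝ) * Q B M (n+1) d z y

lemma Q_nonneg (B : ℕ → ℕ → Finset ℕ) (M : ℕ → ℕ → ℕ → ℕ → ℕ) :
    ∀ n d x y, 0 ≤ Q B M n d x y := by
  intro n d
  induction d generalizing n with
  | zero => intro x y; simp only [Q]; split <;> norm_num
  | succ d ih =>
    intro x y
    simp only [Q]
    exact Finset.sum_nonneg fun z _ => mul_nonneg (Nat.cast_nonneg _) (ih (n+1) z y)

lemma Ncnt_nonneg (B : ℕ → ℕ → Finset ℕ) (M : ℕ → ℕ → ℕ → ℕ → ℕ) (v0k : ℕ → ℕ) (k : ℕ) :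
    ∀ i x, 0 ≤ Ncnt B M v0k k i x := by
  intro i
  induction i with
  | zero => intro x; simp only [Ncnt]; split <;> norm_num
  | succ i ih =>
    intro x
    simp only [Ncnt]
    exact Finset.sum_nonneg fun z _ => mul_nonneg (ih z) (Nat.cast_nonneg _)

lemma sum_N_Q (B : ℕ → ℕ → Finset ℕ) (M : ℕ → ℕ → ℕ → ℕ → ℕ) (v0k : ℕ → ℕ) :
    ∀ d n y, y ∈ B 0 (n + d) →
      ∑ x ∈ B 0 n, Ncnt B M v0k 0 n x * Q B M n d x y = Ncnt B M v0k 0 (n + d) y := by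
  intro d
  induction d with
  | zero =>
    intro n y hy
    simp only [Q]
    rw [Finset.sum_eq_single y]
    · simp
    · intro b _ hb; simp [hb]
    · intro h; exact absurd hy h
  | succ d ih =>
    intro n y hy
    simp only [Q]
    have h1 : ∀ x ∈ B 0 n, Ncnt B M v0k 0 n x * ∑ z ∈ B 0 (n+1), (M 0 n x z : ℝ) * Q B M (n+1) d z y
        = ∑ z ∈ B 0 (n+1), Ncnt B M v0k 0 n x * (M 0 n x z : ℝ) * Q B M (n+1) d z y := by
      intro x _
      rw [Finset.mul_sum]
      exact Finset.sum_congr rfl fun z _ => by ring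
    rw [Finset.sum_congr rfl h1, Finset.sum_comm]
    have h2 : ∀ z ∈ B 0 (n+1),
        ∑ x ∈ B 0 n, Ncnt B M v0k 0 n x * (M 0 n x z : ℝ) * Q B M (n+1) d z y
        = Ncnt B M v0k 0 (n+1) z * Q B M (n+1) d z y := by
      intro z _
      rw [show (Ncnt B M v0k 0 (n+1) z : ℝ) = ∑ x ∈ B 0 n, Ncnt B M v0k 0 n x * (M 0 n x z : ℝ) from rfl,
        Finset.sum_mul]
    rw [Finset.sum_congr rfl h2, ih (n+1) y (by rw [show n+1+d = n+(d+1) by omega]; exact hy),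
      show n+1+d = n+(d+1) by omega]

lemma N_Q_le (B : ℕ → ℕ → Finset ℕ) (M : ℕ → ℕ → ℕ → ℕ → ℕ) (v0k : ℕ → ℕ)
    {n d x y : ℕ} (hx : x ∈ B 0 n) (hy : y ∈ B 0 (n + d)) :
    Ncnt B M v0k 0 n x * Q B M n d x y ≤ Ncnt B M v0k 0 (n + d) y := by
  rw [← sum_N_Q B M v0k d n y hy]
  exact Finset.single_le_sum
    (fun z _ => mul_nonneg (Ncnt_nonneg B M v0k 0 n z) (Q_nonneg B M n d z y)) hx






/-- the source term `c_j` fed into `Br^0` at level `j-1` (at the vertex `W (j-1)`). -/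
def cc (B : ℕ → ℕ → Finset ℕ) (m : ℕ → ℕ → ℕ → ℕ) (k : ℕ) (β : ℝ)
    (ψ : ∀ i, ↥(B k i) → ℝ) (j : ℕ) : ℝ :=
  if h : k ≤ j then
    ∑ u ∈ (B k (j-k)).attach,
      (m k (j-k) u.val : ℝ) * Real.exp (-β * kappa (j-k)) * ψ (j-k) u
  else 0

/-- the minimal extension on `Br^0`. -/
def ff (B : ℕ → ℕ → Finset ℕ) (M : ℕ → ℕ → ℕ → ℕ → ℕ) (m : ℕ → ℕ → ℕ → ℕ)
    (W : ℕ → ℕ) (k : ℕ) (β : ℝ) (ψ : ∀ i, ↥(B k i) → ℝ) (n x : ℕ) : ℝ :=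
  ∑' d : ℕ, Q B M n d x (W (n+d)) * cc B m k β ψ (n+d+1)

/-- the full extension on raw vertices of the glued diagram. -/
def Fraw (B : ℕ → ℕ → Finset ℕ) (M : ℕ → ℕ → ℕ → ℕ → ℕ) (m : ℕ → ℕ → ℕ → ℕ)
    (W : ℕ → ℕ) (k : ℕ) (β : ℝ) (ψ : ∀ i, ↥(B k i) → ℝ) (n : ℕ) (p : ℕ × ℕ) : ℝ :=
  if p.1 = 0 then ff B M m W k β ψ n p.2
  else if h : p.1 = k ∧ k ≤ n ∧ p.2 ∈ B k (n-k) then ψ (n-k) ⟨p.2, h.2.2⟩ else 0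

lemma psi_congr {B : ℕ → ℕ → Finset ℕ} {k : ℕ} (ψ : ∀ i, ↥(B k i) → ℝ)
    {i i' : ℕ} (e : i = i') {u : ℕ} (h : u ∈ B k i) (h' : u ∈ B k i') :
    ψ i ⟨u, h⟩ = ψ i' ⟨u, h'⟩ := by subst e; rfl

lemma cc_nonneg {B : ℕ → ℕ → Finset ℕ} (m : ℕ → ℕ → ℕ → ℕ) (k : ℕ) (β : ℝ)
    {ψ : ∀ i, ↥(B k i) → ℝ} (hψnn : ∀ i v, 0 ≤ ψ i v) (j : ℕ) :
    0 ≤ cc B m k β ψ j := by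
  unfold cc
  split
  · exact Finset.sum_nonneg fun u _ => mul_nonneg
      (mul_nonneg (Nat.cast_nonneg _) (Real.exp_nonneg _)) (hψnn _ _)
  · exact le_refl 0



lemma sum_N_psi {B : ℕ → ℕ → Finset ℕ} {M : ℕ → ℕ → ℕ → ℕ → ℕ} {v0k : ℕ → ℕ} {k : ℕ}
    (hv : v0k k ∈ B k 0) (hB0 : B k 0 = {v0k k})
    {ψ : ∀ i, ↥(B k i) → ℝ}
    (hψrec : ∀ i v, ψ i v = ∑ w, CompMat B M k i v w * ψ (i+1) w) :
    ∀ i, ∑ u ∈ (B k i).attach, Ncnt B M v0k k i u.val * ψ i u = ψ 0 ⟨v0k k, hv⟩ := by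
  intro i
  induction i with
  | zero =>
    have hatt : (B k 0).attach = {(⟨v0k k, hv⟩ : ↥(B k 0))} := by
      apply Finset.eq_singleton_iff_unique_mem.2
      refine ⟨Finset.mem_attach _ _, ?_⟩
      intro a _
      apply Subtype.ext
      have h2 : (a : ℕ) ∈ ({v0k k} : Finset ℕ) := by rw [← hB0]; exact a.2
      simpa using h2
    rw [hatt, Finset.sum_singleton]
    have : Ncnt B M v0k k 0 (v0k k) = 1 := by simp [Ncnt]
    rw [this, one_mul]
  | succ i ih =>
    have key : ∀ y : ↥(B k (i+1)), Ncnt B M v0k k (i+1) y.val * ψ (i+1) y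
        = ∑ x ∈ (B k i).attach,
            Ncnt B M v0k k i x.val * ((M k i x.val y.val : ℝ) * ψ (i+1) y) := by
      intro y
      have : Ncnt B M v0k k (i+1) y.val
          = ∑ x ∈ (B k i).attach, Ncnt B M v0k k i x.val * (M k i x.val y.val : ℝ) := by
        rw [Finset.sum_attach (B k i) (fun x => Ncnt B M v0k k i x * (M k i x y.val : ℝ))]
        rfl
      rw [this, Finset.sum_mul]
      exact Finset.sum_congr rfl fun x _ => by ring
    rw [Finset.sum_congr rfl (fun y _ => key y), Finset.sum_comm]
    have inner : ∀ x ∈ (B k i).attach,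
        ∑ y ∈ (B k (i+1)).attach,
            Ncnt B M v0k k i x.val * ((M k i x.val y.val : ℝ) * ψ (i+1) y)
        = Ncnt B M v0k k i x.val * ψ i x := by
      intro x _
      rw [← Finset.mul_sum]
      congr 1
      rw [hψrec i x, Finset.univ_eq_attach]
      rfl
    rw [Finset.sum_congr rfl inner, ih]

lemma maj_summable {s t : ℕ → ℕ → ℝ} {k : ℕ} {β : ℝ} (Ψ : ℝ)
    (hs : Summable fun j : ℕ => s k (j+1) * Real.exp (((j:ℝ)+1) * β))
    (ht : Summable fun j : ℕ => t k (j+1) * Real.exp (-(((j:ℝ)+1) * β))) :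
    Summable (fun i : ℕ => Real.exp (-β * kappa (i+1)) *
      (if Even (i+1) then t k ((i+1)/2) else s k ((i+1)/2+1)) * Ψ) := by
  apply Summable.even_add_odd
  · -- i = 2j : i+1 = 2j+1 odd
    apply Summable.congr (hs.mul_right (Real.exp (-β) * Ψ))
    intro j
    have h1 : ¬ Even (2*j+1) := by simp [Nat.even_add_one, parity_simps]
    have h2 : (2*j+1)/2 = j := by omega
    have h3 : kappa (2*j+1) = -(j:ℝ) := by simp [kappa, h1, h2]
    simp only [h1, h3, if_false, h2]
    rw [show (-β * -(j:ℝ)) = ((j:ℝ)+1)*β + (-β) by ring, Real.exp_add]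
    ring
  · -- i = 2j+1 : i+1 = 2j+2 even
    apply Summable.congr (ht.mul_right Ψ)
    intro j
    have h1 : Even (2*j+1+1) := by refine ⟨j+1, by ring⟩
    have h2 : (2*j+1+1)/2 = j+1 := by omega
    have h3 : kappa (2*j+1+1) = (j:ℝ)+1 := by
      simp [kappa, h1, h2]
    simp only [h1, h3, if_true, h2]
    ring_nf

lemma cc_bound {B : ℕ → ℕ → Finset ℕ} {M : ℕ → ℕ → ℕ → ℕ → ℕ} {v0k W : ℕ → ℕ}
    {m : ℕ → ℕ → ℕ → ℕ} {s t : ℕ → ℕ → ℝ} {k₀ : ℕ} {β : ℝ}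
    {ψ : ∀ i, ↥(B (k₀+1) i) → ℝ} {Ψ : ℝ}
    (hψnn : ∀ i v, 0 ≤ ψ i v)
    (hmt : ∀ j u, u ∈ B (k₀+1) (2*j+2) →
      (m (k₀+1) (2*j+2) u : ℝ) ≤ t (k₀+1) (j+1) * Ncnt B M v0k (k₀+1) (2*j+2) u
          / Ncnt B M v0k 0 (k₀+2*j+2) (W (k₀+2*j+2)))
    (hms : ∀ j u, u ∈ B (k₀+1) (2*j+1) →
      (m (k₀+1) (2*j+1) u : ℝ) ≤ s (k₀+1) (j+1) * Ncnt B M v0k (k₀+1) (2*j+1) u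
          / Ncnt B M v0k 0 (k₀+2*j+1) (W (k₀+2*j+1)))
    (SN : ∀ i, ∑ u ∈ (B (k₀+1) i).attach, Ncnt B M v0k (k₀+1) i u.val * ψ i u = Ψ)
    (i : ℕ) (hN0 : 0 < Ncnt B M v0k 0 (k₀+1+i) (W (k₀+1+i))) :
    Ncnt B M v0k 0 (k₀+1+i) (W (k₀+1+i)) * cc B m (k₀+1) β ψ (k₀+1+i+1)
      ≤ Real.exp (-β * kappa (i+1)) *
        (if Even (i+1) then t (k₀+1) ((i+1)/2) else s (k₀+1) ((i+1)/2+1)) * Ψ := by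
  set N0 := Ncnt B M v0k 0 (k₀+1+i) (W (k₀+1+i)) with hN0def
  set C : ℝ := if Even (i+1) then t (k₀+1) ((i+1)/2) else s (k₀+1) ((i+1)/2+1) with hC
  have hle : ∀ u : ↥(B (k₀+1) (i+1)),
      (m (k₀+1) (i+1) u.val : ℝ) ≤ C * Ncnt B M v0k (k₀+1) (i+1) u.val / N0 := by
    intro u
    rcases Nat.even_or_odd (i+1) with he | ho
    · obtain ⟨j, hj⟩ := he
      have e : i+1 = 2*(j-1)+2 := by omega
      have hu : u.val ∈ B (k₀+1) (2*(j-1)+2) := by rw [← e]; exact u.2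
      have h := hmt (j-1) u.val hu
      have e2 : k₀+2*(j-1)+2 = k₀+1+i := by omega
      have e3 : (j-1)+1 = (i+1)/2 := by omega
      rw [e2, e3, ← e] at h
      rw [hC, if_pos (by exact ⟨j, hj⟩)]
      exact h
    · obtain ⟨j, hj⟩ := ho
      have e : i+1 = 2*j+1 := by omega
      have hu : u.val ∈ B (k₀+1) (2*j+1) := by rw [← e]; exact u.2
      have h := hms j u.val hu
      have e2 : k₀+2*j+1 = k₀+1+i := by omega
      have e3 : j+1 = (i+1)/2+1 := by omega
      rw [e2, e3, ← e] at h
      rw [hC, if_neg (by rw [hj]; simp [Nat.even_add_one, parity_simps])]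
      exact h
  have hcc : cc B m (k₀+1) β ψ (k₀+1+i+1)
      = ∑ u ∈ (B (k₀+1) (i+1)).attach,
          (m (k₀+1) (i+1) u.val : ℝ) * Real.exp (-β * kappa (i+1)) * ψ (i+1) u := by
    unfold cc
    rw [dif_pos (by omega : k₀+1 ≤ k₀+1+i+1)]
    have key : ∀ a b : ℕ, a = b →
        (∑ u ∈ (B (k₀+1) a).attach,
          (m (k₀+1) a u.val : ℝ) * Real.exp (-β * kappa a) * ψ a u)
        = (∑ u ∈ (B (k₀+1) b).attach,
          (m (k₀+1) b u.val : ℝ) * Real.exp (-β * kappa b) * ψ b u) := by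
      rintro a b rfl; rfl
    exact key _ _ (by omega)
  have hstep : cc B m (k₀+1) β ψ (k₀+1+i+1)
      ≤ (C * Real.exp (-β * kappa (i+1)) / N0) * Ψ := by
    rw [hcc, ← SN (i+1), Finset.mul_sum]
    apply Finset.sum_le_sum
    intro u _
    have h1 := hle u
    have h2 : (m (k₀+1) (i+1) u.val : ℝ) * Real.exp (-β * kappa (i+1)) * ψ (i+1) u
        ≤ (C * Ncnt B M v0k (k₀+1) (i+1) u.val / N0) * Real.exp (-β * kappa (i+1)) * ψ (i+1) u := by
      apply mul_le_mul_of_nonneg_right _ (hψnn _ _)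
      exact mul_le_mul_of_nonneg_right h1 (Real.exp_nonneg _)
    calc (m (k₀+1) (i+1) u.val : ℝ) * Real.exp (-β * kappa (i+1)) * ψ (i+1) u
        ≤ (C * Ncnt B M v0k (k₀+1) (i+1) u.val / N0) * Real.exp (-β * kappa (i+1)) * ψ (i+1) u := h2
      _ = C * Real.exp (-β * kappa (i+1)) / N0 * (Ncnt B M v0k (k₀+1) (i+1) u.val * ψ (i+1) u) := by
          ring
  have := mul_le_mul_of_nonneg_left hstep (le_of_lt hN0)
  calc N0 * cc B m (k₀+1) β ψ (k₀+1+i+1)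
      ≤ N0 * (C * Real.exp (-β * kappa (i+1)) / N0 * Ψ) := this
    _ = Real.exp (-β * kappa (i+1)) * C * Ψ := by
        have e : N0 * (C * Real.exp (-β * kappa (i+1)) / N0 * Ψ)
            = (N0 / N0) * (Real.exp (-β * kappa (i+1)) * C * Ψ) := by ring
        rw [e, div_self (ne_of_gt hN0), one_mul]

lemma ff_summable {B : ℕ → ℕ → Finset ℕ} {M : ℕ → ℕ → ℕ → ℕ → ℕ} {v0k W : ℕ → ℕ}
    {m : ℕ → ℕ → ℕ → ℕ} {k : ℕ} {β : ℝ} {ψ : ∀ i, ↥(B k i) → ℝ} {g : ℕ → ℝ}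
    (hW : ∀ j, W j ∈ B 0 j)
    (hNpos : ∀ i x, x ∈ B 0 i → 0 < Ncnt B M v0k 0 i x)
    (hψnn : ∀ i v, 0 ≤ ψ i v)
    (hccb : ∀ i, Ncnt B M v0k 0 (k+i) (W (k+i)) * cc B m k β ψ (k+i+1) ≤ g i)
    (hg : Summable g)
    {n x : ℕ} (hx : x ∈ B 0 n) :
    Summable (fun d => Q B M n d x (W (n+d)) * cc B m k β ψ (n+d+1)) := by
  rw [← summable_nat_add_iff (k+1)]
  have hNx := hNpos n x hx
  have hgsum : Summable (fun d : ℕ => g (n+d+1) / Ncnt B M v0k 0 n x) := by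
    apply Summable.congr (((summable_nat_add_iff (n+1)).2 hg).div_const (Ncnt B M v0k 0 n x))
    intro d
    rw [show d+(n+1) = n+d+1 by omega]
  apply Summable.of_nonneg_of_le _ _ hgsum
  · intro d
    exact mul_nonneg (Q_nonneg B M _ _ _ _) (cc_nonneg m k β hψnn _)
  · intro d
    have h1 : Ncnt B M v0k 0 n x * Q B M n (d+(k+1)) x (W (n+(d+(k+1))))
        ≤ Ncnt B M v0k 0 (n+(d+(k+1))) (W (n+(d+(k+1)))) := N_Q_le B M v0k hx (hW _)
    have h2 : Q B M n (d+(k+1)) x (W (n+(d+(k+1))))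
        ≤ Ncnt B M v0k 0 (n+(d+(k+1))) (W (n+(d+(k+1)))) / Ncnt B M v0k 0 n x := by
      rw [le_div_iff₀ hNx]
      calc Q B M n (d+(k+1)) x (W (n+(d+(k+1)))) * Ncnt B M v0k 0 n x
          = Ncnt B M v0k 0 n x * Q B M n (d+(k+1)) x (W (n+(d+(k+1)))) := by ring
        _ ≤ _ := h1
    have hccnn := cc_nonneg (B := B) m k β hψnn (n+(d+(k+1))+1)
    calc Q B M n (d+(k+1)) x (W (n+(d+(k+1)))) * cc B m k β ψ (n+(d+(k+1))+1)
        ≤ (Ncnt B M v0k 0 (n+(d+(k+1))) (W (n+(d+(k+1)))) / Ncnt B M v0k 0 n x)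
            * cc B m k β ψ (n+(d+(k+1))+1) := mul_le_mul_of_nonneg_right h2 hccnn
      _ = (Ncnt B M v0k 0 (n+(d+(k+1))) (W (n+(d+(k+1)))) * cc B m k β ψ (n+(d+(k+1))+1))
            / Ncnt B M v0k 0 n x := by ring
      _ ≤ g (n+d+1) / Ncnt B M v0k 0 n x := by
          apply (div_le_div_iff_of_pos_right hNx).2
          rw [show n+(d+(k+1)) = k+(n+d+1) by omega]
          exact hccb (n+d+1)

lemma ff_nonneg {B : ℕ → ℕ → Finset ℕ} {M : ℕ → ℕ → ℕ → ℕ → ℕ} {W : ℕ → ℕ}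
    {m : ℕ → ℕ → ℕ → ℕ} {k : ℕ} {β : ℝ} {ψ : ∀ i, ↥(B k i) → ℝ}
    (hψnn : ∀ i v, 0 ≤ ψ i v) (n x : ℕ) :
    0 ≤ ff B M m W k β ψ n x :=
  tsum_nonneg fun d => mul_nonneg (Q_nonneg B M _ _ _ _) (cc_nonneg m k β hψnn _)

lemma ff_rec {B : ℕ → ℕ → Finset ℕ} {M : ℕ → ℕ → ℕ → ℕ → ℕ} {v0k W : ℕ → ℕ}
    {m : ℕ → ℕ → ℕ → ℕ} {k : ℕ} {β : ℝ} {ψ : ∀ i, ↥(B k i) → ℝ} {g : ℕ → ℝ}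
    (hW : ∀ j, W j ∈ B 0 j)
    (hNpos : ∀ i x, x ∈ B 0 i → 0 < Ncnt B M v0k 0 i x)
    (hψnn : ∀ i v, 0 ≤ ψ i v)
    (hccb : ∀ i, Ncnt B M v0k 0 (k+i) (W (k+i)) * cc B m k β ψ (k+i+1) ≤ g i)
    (hg : Summable g)
    {n x : ℕ} (hx : x ∈ B 0 n) :
    ff B M m W k β ψ n x = (if x = W n then cc B m k β ψ (n+1) else 0)
      + ∑ y ∈ B 0 (n+1), (M 0 n x y : ℝ) * ff B M m W k β ψ (n+1) y := by
  have hsum := ff_summable hW hNpos hψnn hccb hg hx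
  unfold ff
  rw [Summable.tsum_eq_zero_add hsum]
  congr 1
  · show Q B M n 0 x (W (n+0)) * cc B m k β ψ (n+0+1) = _
    simp only [Q, Nat.add_zero]
    split <;> simp
  · have key : ∀ d : ℕ, Q B M n (d+1) x (W (n+(d+1))) * cc B m k β ψ (n+(d+1)+1)
        = ∑ z ∈ B 0 (n+1), (M 0 n x z : ℝ)
            * (Q B M (n+1) d z (W ((n+1)+d)) * cc B m k β ψ ((n+1)+d+1)) := by
      intro d
      rw [show Q B M n (d+1) x (W (n+(d+1)))
          = ∑ z ∈ B 0 (n+1), (M 0 n x z : ℝ) * Q B M (n+1) d z (W (n+(d+1))) from rfl,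
        Finset.sum_mul]
      apply Finset.sum_congr rfl
      intro z _
      rw [show n+(d+1) = (n+1)+d by omega]
      ring
    rw [tsum_congr key, Summable.tsum_finsetSum (fun z hz => Summable.mul_left _ (ff_summable hW hNpos hψnn hccb hg hz))]
    apply Finset.sum_congr rfl
    intro z _
    rw [tsum_mul_left]

lemma mem_GV {B : ℕ → ℕ → Finset ℕ} {n : ℕ} {p : ℕ × ℕ} :
    p ∈ GV B n ↔ (p.1 = 0 ∧ p.2 ∈ B 0 n) ∨ (1 ≤ p.1 ∧ p.1 ≤ n ∧ p.2 ∈ B p.1 (n - p.1)) := by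
  rcases p with ⟨a, u⟩
  simp only [GV, Finset.mem_union, Finset.mem_product, Finset.mem_singleton,
    Finset.mem_biUnion, Finset.mem_range]
  constructor
  · rintro (⟨rfl, h2⟩ | ⟨k', hk', rfl, h2⟩)
    · exact Or.inl ⟨rfl, h2⟩
    · exact Or.inr ⟨by omega, by omega, h2⟩
  · rintro (⟨rfl, h2⟩ | ⟨h1, h2, h3⟩)
    · exact Or.inl ⟨rfl, h2⟩
    · right
      refine ⟨a-1, by omega, by omega, ?_⟩
      rw [show a-1+1 = a by omega]
      exact h3

lemma sum_GV (B : ℕ → ℕ → Finset ℕ) (g : ℕ × ℕ → ℝ) (n : ℕ) :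
    ∑ p ∈ GV B n, g p = (∑ y ∈ B 0 n, g (0,y))
      + ∑ k' ∈ Finset.range n, ∑ u ∈ B (k'+1) (n-(k'+1)), g (k'+1,u) := by
  have hdis : Disjoint ({0} ×ˢ B 0 n)
      ((Finset.range n).biUnion fun k => {k+1} ×ˢ B (k+1) (n - (k+1))) := by
    apply Finset.disjoint_left.2
    rintro ⟨c, u⟩ hc hd
    simp only [Finset.mem_product, Finset.mem_singleton] at hc
    simp only [Finset.mem_biUnion, Finset.mem_product, Finset.mem_singleton,
      Finset.mem_range] at hd
    obtain ⟨k', _, h1, _⟩ := hd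
    omega
  have hpair : (↑(Finset.range n) : Set ℕ).PairwiseDisjoint
      (fun k => {k+1} ×ˢ B (k+1) (n - (k+1))) := by
    intro a _ b _ hab
    apply Finset.disjoint_left.2
    rintro ⟨c, u⟩ hc hd
    simp only [Finset.mem_product, Finset.mem_singleton] at hc hd
    exact hab (by omega)
  unfold GV
  rw [Finset.sum_union hdis, Finset.sum_biUnion hpair]
  congr 1
  · rw [Finset.sum_product, Finset.sum_singleton]
  · apply Finset.sum_congr rfl
    intro k' _
    rw [Finset.sum_product, Finset.sum_singleton]

lemma sum_coe {α : Type*} [DecidableEq α] (s : Finset α) (G : ↥s → ℝ) :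
    ∑ w : ↥s, G w = ∑ p ∈ s, (if h : p ∈ s then G ⟨p, h⟩ else 0) := by
  rw [Finset.univ_eq_attach, ← Finset.sum_attach s (fun p => if h : p ∈ s then G ⟨p, h⟩ else 0)]
  apply Finset.sum_congr rfl
  intro w _
  rw [dif_pos w.2]

section evals
variable {B : ℕ → ℕ → Finset ℕ} {M : ℕ → ℕ → ℕ → ℕ → ℕ} {W : ℕ → ℕ}
  {m : ℕ → ℕ → ℕ → ℕ} {k : ℕ} {β : ℝ} {ψ : ∀ i, ↥(B k i) → ℝ}

lemma GAraw_eval_00 (n x y : ℕ) : GAraw M m W β n (0,x) (0,y) = (M 0 n x y : ℝ) := by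
  simp [GAraw]

lemma GAraw_eval_0a {a : ℕ} (ha : 1 ≤ a) (n x u : ℕ) :
    GAraw M m W β n (0,x) (a,u)
      = if x = W n then (m a (n+1-a) u : ℝ) * Real.exp (-β * kappa (n+1-a)) else 0 := by
  simp [GAraw, show ¬a = 0 by omega, ha]

lemma GAraw_eval_a0 {a : ℕ} (ha : 1 ≤ a) (n u y : ℕ) :
    GAraw M m W β n (a,u) (0,y) = 0 := by
  simp [GAraw, show ¬a = 0 by omega]

lemma GAraw_eval_ab {a b : ℕ} (ha : 1 ≤ a) (hb : 1 ≤ b) (n u v : ℕ) :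
    GAraw M m W β n (a,u) (b,v) = if a = b then (M a (n-a) u v : ℝ) else 0 := by
  by_cases hab : a = b
  · subst hab
    simp [GAraw, show ¬a = 0 by omega, ha]
  · simp [GAraw, show ¬a = 0 by omega, show ¬b = 0 by omega, hab]

lemma Fraw_eval_0 (n x : ℕ) : Fraw B M m W k β ψ n (0,x) = ff B M m W k β ψ n x := by
  simp [Fraw]

lemma Fraw_eval_k (hk : 1 ≤ k) {n : ℕ} (hkn : k ≤ n) {u : ℕ} (hu : u ∈ B k (n-k)) :
    Fraw B M m W k β ψ n (k,u) = ψ (n-k) ⟨u, hu⟩ := by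
  unfold Fraw
  rw [if_neg (by omega : ¬(k,u).1 = 0), dif_pos ⟨rfl, hkn, hu⟩]

lemma Fraw_eval_ne {a : ℕ} (ha : ¬a = 0) (hak : ¬a = k) (n u : ℕ) :
    Fraw B M m W k β ψ n (a,u) = 0 := by
  unfold Fraw
  rw [if_neg ha, dif_neg]
  rintro ⟨h, -⟩
  exact hak h

end evals

lemma Fraw_rec {B : ℕ → ℕ → Finset ℕ} {M : ℕ → ℕ → ℕ → ℕ → ℕ} {v0k W : ℕ → ℕ}
    {m : ℕ → ℕ → ℕ → ℕ} {k : ℕ} {β : ℝ} {ψ : ∀ i, ↥(B k i) → ℝ} {g : ℕ → ℝ}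
    (hk : 1 ≤ k)
    (hW : ∀ j, W j ∈ B 0 j)
    (hNpos : ∀ i x, x ∈ B 0 i → 0 < Ncnt B M v0k 0 i x)
    (hψnn : ∀ i v, 0 ≤ ψ i v)
    (hψrec : ∀ i v, ψ i v = ∑ w, CompMat B M k i v w * ψ (i+1) w)
    (hccb : ∀ i, Ncnt B M v0k 0 (k+i) (W (k+i)) * cc B m k β ψ (k+i+1) ≤ g i)
    (hg : Summable g)
    {n : ℕ} {p : ℕ × ℕ} (hp : p ∈ GV B n) :
    Fraw B M m W k β ψ n p
      = ∑ q ∈ GV B (n+1), GAraw M m W β n p q * Fraw B M m W k β ψ (n+1) q := by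
  rw [sum_GV]
  rcases p with ⟨a, x⟩
  rcases mem_GV.1 hp with ⟨h0, hx⟩ | ⟨h1, h2, h3⟩
  · -- Br^0 vertex
    simp only at h0 hx
    subst h0
    have hfirst : ∑ y ∈ B 0 (n+1), GAraw M m W β n (0,x) (0,y) * Fraw B M m W k β ψ (n+1) (0,y)
        = ∑ y ∈ B 0 (n+1), (M 0 n x y : ℝ) * ff B M m W k β ψ (n+1) y :=
      Finset.sum_congr rfl fun y _ => by rw [GAraw_eval_00, Fraw_eval_0]
    have hsecond : ∑ k' ∈ Finset.range (n+1), ∑ u ∈ B (k'+1) (n+1-(k'+1)),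
          GAraw M m W β n (0,x) (k'+1,u) * Fraw B M m W k β ψ (n+1) (k'+1,u)
        = if x = W n then cc B m k β ψ (n+1) else 0 := by
      rcases le_or_gt k (n+1) with hkn | hkn
      · rw [Finset.sum_eq_single (k-1)]
        · rw [show k-1+1 = k by omega]
          by_cases hxw : x = W n
          · rw [if_pos hxw]
            rw [← Finset.sum_attach (B k (n+1-k))
              (fun u => GAraw M m W β n (0,x) (k,u) * Fraw B M m W k β ψ (n+1) (k,u))]
            have hterm : ∀ u : ↥(B k (n+1-k)),
                GAraw M m W β n (0,x) (k, u.val) * Fraw B M m W k β ψ (n+1) (k, u.val)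
                = (m k (n+1-k) u.val : ℝ) * Real.exp (-β * kappa (n+1-k)) * ψ (n+1-k) u := by
              intro u
              rw [GAraw_eval_0a hk, if_pos hxw,
                Fraw_eval_k hk (by omega : k ≤ n+1) u.2]
            rw [Finset.sum_congr rfl fun u _ => hterm u]
            unfold cc
            rw [dif_pos hkn]
          · rw [if_neg hxw]
            apply Finset.sum_eq_zero
            intro u _
            rw [GAraw_eval_0a hk, if_neg hxw, zero_mul]
        · intro b _ hb
          apply Finset.sum_eq_zero
          intro u _
          rw [Fraw_eval_ne (by omega) (by omega), mul_zero]
        · intro habs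
          exact absurd (Finset.mem_range.2 (by omega)) habs
      · rw [Finset.sum_eq_zero]
        · have : cc B m k β ψ (n+1) = 0 := by
            unfold cc
            rw [dif_neg (by omega : ¬k ≤ n+1)]
          rw [this, ite_self]
        · intro b hbmem
          have hb' : b < n+1 := Finset.mem_range.1 hbmem
          apply Finset.sum_eq_zero
          intro u _
          rw [Fraw_eval_ne (by omega) (by omega : ¬b+1 = k), mul_zero]
    rw [hfirst, hsecond, Fraw_eval_0,
      ff_rec hW hNpos hψnn hccb hg hx, add_comm]
  · -- component vertex
    simp only at h1 h2 h3
    have hfirst : ∑ y ∈ B 0 (n+1), GAraw M m W β n (a,x) (0,y) * Fraw B M m W k β ψ (n+1) (0,y)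
        = 0 :=
      Finset.sum_eq_zero fun y _ => by rw [GAraw_eval_a0 h1, zero_mul]
    by_cases hak : a = k
    · subst hak
      have hsecond : ∑ k' ∈ Finset.range (n+1), ∑ u ∈ B (k'+1) (n+1-(k'+1)),
            GAraw M m W β n (a,x) (k'+1,u) * Fraw B M m W a β ψ (n+1) (k'+1,u)
          = ψ (n-a) ⟨x, h3⟩ := by
        rw [Finset.sum_eq_single (a-1)]
        · rw [show a-1+1 = a by omega]
          rw [← Finset.sum_attach (B a (n+1-a))
            (fun u => GAraw M m W β n (a,x) (a,u) * Fraw B M m W a β ψ (n+1) (a,u))]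
          have hterm : ∀ u : ↥(B a (n+1-a)),
              GAraw M m W β n (a,x) (a, u.val) * Fraw B M m W a β ψ (n+1) (a, u.val)
              = (M a (n-a) x u.val : ℝ) * ψ (n+1-a) u := by
            intro u
            rw [GAraw_eval_ab h1 h1, if_pos rfl,
              Fraw_eval_k h1 (by omega : a ≤ n+1) u.2]
          rw [Finset.sum_congr rfl fun u _ => hterm u]
          have hrec' : ∀ (i : ℕ) (v : ℕ) (hv : v ∈ B a i) (b : ℕ), b = i+1 →
              ψ i ⟨v, hv⟩ = ∑ w ∈ (B a b).attach, (M a i v w.val : ℝ) * ψ b w := by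
            rintro i v hv b rfl
            rw [hψrec i ⟨v, hv⟩, Finset.univ_eq_attach]
            rfl
          exact (hrec' (n-a) x h3 (n+1-a) (by omega)).symm
        · intro b _ hb
          apply Finset.sum_eq_zero
          intro u _
          rw [GAraw_eval_ab h1 (by omega), if_neg (by omega), zero_mul]
        · intro habs
          exact absurd (Finset.mem_range.2 (by omega)) habs
      rw [hfirst, hsecond, Fraw_eval_k h1 h2 h3, zero_add]
    · have hsecond : ∑ k' ∈ Finset.range (n+1), ∑ u ∈ B (k'+1) (n+1-(k'+1)),
            GAraw M m W β n (a,x) (k'+1,u) * Fraw B M m W k β ψ (n+1) (k'+1,u)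
          = 0 := by
        apply Finset.sum_eq_zero
        intro b _
        apply Finset.sum_eq_zero
        intro u _
        by_cases hab : a = b+1
        · rw [Fraw_eval_ne (by omega) (by omega : ¬b+1 = k), mul_zero]
        · rw [GAraw_eval_ab h1 (by omega), if_neg hab, zero_mul]
      rw [hfirst, hsecond, Fraw_eval_ne (by omega) hak, zero_add]

lemma GAraw_nonneg {M : ℕ → ℕ → ℕ → ℕ → ℕ} {m : ℕ → ℕ → ℕ → ℕ} {W : ℕ → ℕ}
    {β : ℝ} {n : ℕ} {p q : ℕ × ℕ} : 0 ≤ GAraw M m W β n p q := by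
  unfold GAraw
  split_ifs <;> positivity

lemma ff_min {B : ℕ → ℕ → Finset ℕ} {M : ℕ → ℕ → ℕ → ℕ → ℕ} {v0k W : ℕ → ℕ}
    {m : ℕ → ℕ → ℕ → ℕ} {k : ℕ} {β : ℝ} {ψ : ∀ i, ↥(B k i) → ℝ} {g : ℕ → ℝ}
    (hk : 1 ≤ k)
    (hW : ∀ j, W j ∈ B 0 j)
    (hNpos : ∀ i x, x ∈ B 0 i → 0 < Ncnt B M v0k 0 i x)
    (hψnn : ∀ i v, 0 ≤ ψ i v)
    (hccb : ∀ i, Ncnt B M v0k 0 (k+i) (W (k+i)) * cc B m k β ψ (k+i+1) ≤ g i)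
    (hg : Summable g)
    (φ : ∀ n, ↥(GV B n) → ℝ)
    (hφnn : ∀ n v, 0 ≤ φ n v)
    (hφrec : ∀ n v, φ n v = ∑ w, GAmat B M m W β n v w * φ (n+1) w)
    (hφψ : ∀ (n' : ℕ) (q : ↥(GV B n')), q.val.1 = k → k ≤ n' →
      ∀ (hu : q.val.2 ∈ B k (n'-k)), ψ (n'-k) ⟨q.val.2, hu⟩ ≤ φ n' q)
    {n x : ℕ} (hx : x ∈ B 0 n) (hmem : (0,x) ∈ GV B n) :
    ff B M m W k β ψ n x ≤ φ n ⟨(0,x), hmem⟩ := by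
  classical
  -- the key one-step lower bound for φ on Br^0 vertices
  have keyφ : ∀ (n x : ℕ) (hmem : (0,x) ∈ GV B n),
      (∑ z ∈ B 0 (n+1), (M 0 n x z : ℝ) *
          (if h : (0,z) ∈ GV B (n+1) then φ (n+1) ⟨(0,z), h⟩ else 0))
        + (if x = W n then cc B m k β ψ (n+1) else 0)
      ≤ φ n ⟨(0,x), hmem⟩ := by
    intro n x hmem
    rw [hφrec n ⟨(0,x), hmem⟩]
    have e1 : ∑ w : ↥(GV B (n+1)), GAmat B M m W β n ⟨(0,x),hmem⟩ w * φ (n+1) w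
        = ∑ q ∈ GV B (n+1), (if h : q ∈ GV B (n+1)
            then GAraw M m W β n (0,x) q * φ (n+1) ⟨q,h⟩ else 0) :=
      sum_coe (GV B (n+1)) (fun w => GAmat B M m W β n ⟨(0,x),hmem⟩ w * φ (n+1) w)
    rw [e1, sum_GV]
    have hA : ∑ z ∈ B 0 (n+1), (M 0 n x z : ℝ) *
          (if h : (0,z) ∈ GV B (n+1) then φ (n+1) ⟨(0,z), h⟩ else 0)
        = ∑ y ∈ B 0 (n+1), (if h : (0,y) ∈ GV B (n+1)
            then GAraw M m W β n (0,x) (0,y) * φ (n+1) ⟨(0,y),h⟩ else 0) := by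
      apply Finset.sum_congr rfl
      intro z hz
      have hz' : (0,z) ∈ GV B (n+1) := mem_GV.2 (Or.inl ⟨rfl, hz⟩)
      rw [dif_pos hz', dif_pos hz', GAraw_eval_00]
    have hdnn : ∀ (q : ℕ × ℕ), 0 ≤ (if h : q ∈ GV B (n+1)
        then GAraw M m W β n (0,x) q * φ (n+1) ⟨q,h⟩ else 0) := by
      intro q
      by_cases h : q ∈ GV B (n+1)
      · rw [dif_pos h]; exact mul_nonneg GAraw_nonneg (hφnn _ _)
      · rw [dif_neg h]
    apply add_le_add (le_of_eq hA)
    -- second: the gluing arrows give at least the cc term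
    rcases le_or_gt k (n+1) with hkn | hkn
    · have hmemrange : k-1 ∈ Finset.range (n+1) := Finset.mem_range.2 (by omega)
      have single := Finset.single_le_sum
        (f := fun b => ∑ u ∈ B (b+1) (n+1-(b+1)), (if h : ((b+1:ℕ),u) ∈ GV B (n+1)
            then GAraw M m W β n (0,x) (b+1,u) * φ (n+1) ⟨(b+1,u),h⟩ else 0))
        (fun b _ => Finset.sum_nonneg fun u _ => hdnn _) hmemrange
      refine le_trans ?_ single
      rw [show k-1+1 = k by omega]
      by_cases hxw : x = W n
      · rw [if_pos hxw]
        unfold cc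
        rw [dif_pos hkn]
        rw [← Finset.sum_attach (B k (n+1-k)) (fun u => (if h : ((k:ℕ),u) ∈ GV B (n+1)
            then GAraw M m W β n (0,x) (k,u) * φ (n+1) ⟨(k,u),h⟩ else 0))]
        apply Finset.sum_le_sum
        intro u _
        have hqm : ((k:ℕ), u.val) ∈ GV B (n+1) := mem_GV.2 (Or.inr ⟨hk, by omega, u.2⟩)
        rw [dif_pos hqm, GAraw_eval_0a hk, if_pos hxw]
        have hle := hφψ (n+1) ⟨(k,u.val), hqm⟩ rfl (by omega) u.2
        calc (m k (n+1-k) u.val : ℝ) * Real.exp (-β * kappa (n+1-k)) * ψ (n+1-k) u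
            ≤ (m k (n+1-k) u.val : ℝ) * Real.exp (-β * kappa (n+1-k)) * φ (n+1) ⟨(k,u.val), hqm⟩ := by
              apply mul_le_mul_of_nonneg_left _ (by positivity)
              exact hle
          _ = _ := rfl
      · rw [if_neg hxw]
        exact Finset.sum_nonneg fun u _ => hdnn _
    · have hz : cc B m k β ψ (n+1) = 0 := by
        unfold cc; rw [dif_neg (by omega : ¬k ≤ n+1)]
      rw [hz, ite_self]
      exact Finset.sum_nonneg fun b _ => Finset.sum_nonneg fun u _ => hdnn _
  -- partial sums are dominated by φ
  have claim : ∀ (D n x : ℕ), x ∈ B 0 n → ∀ (hmem : (0,x) ∈ GV B n),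
      ∑ d ∈ Finset.range D, Q B M n d x (W (n+d)) * cc B m k β ψ (n+d+1)
        ≤ φ n ⟨(0,x), hmem⟩ := by
    intro D
    induction D with
    | zero => intro n x _ hmem; simp [hφnn]
    | succ D ih =>
      intro n x hx hmem
      rw [Finset.sum_range_succ']
      have hkey : ∀ d : ℕ, Q B M n (d+1) x (W (n+(d+1))) * cc B m k β ψ (n+(d+1)+1)
          = ∑ z ∈ B 0 (n+1), (M 0 n x z : ℝ)
              * (Q B M (n+1) d z (W ((n+1)+d)) * cc B m k β ψ ((n+1)+d+1)) := by
        intro d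
        rw [show Q B M n (d+1) x (W (n+(d+1)))
            = ∑ z ∈ B 0 (n+1), (M 0 n x z : ℝ) * Q B M (n+1) d z (W (n+(d+1))) from rfl,
          Finset.sum_mul]
        apply Finset.sum_congr rfl
        intro z _
        rw [show n+(d+1) = (n+1)+d by omega]
        ring
      rw [Finset.sum_congr rfl (fun d _ => hkey d), Finset.sum_comm]
      have hterm0 : Q B M n 0 x (W (n+0)) * cc B m k β ψ (n+0+1)
          = if x = W n then cc B m k β ψ (n+1) else 0 := by
        show (if x = W n then (1:ℝ) else 0) * cc B m k β ψ (n+1) = _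
        split <;> simp
      rw [hterm0]
      refine le_trans (add_le_add ?_ (le_refl _)) (keyφ n x hmem)
      apply Finset.sum_le_sum
      intro z hz
      rw [← Finset.mul_sum]
      have hz' : (0,z) ∈ GV B (n+1) := mem_GV.2 (Or.inl ⟨rfl, hz⟩)
      rw [dif_pos hz']
      exact mul_le_mul_of_nonneg_left (ih (n+1) z hz hz') (Nat.cast_nonneg _)
  exact Summable.tsum_le_of_sum_range_le (ff_summable hW hNpos hψnn hccb hg hx)
    (fun D => claim D n x hx hmem)

lemma Fraw_nonneg {B : ℕ → ℕ → Finset ℕ} {M : ℕ → ℕ → ℕ → ℕ → ℕ} {W : ℕ → ℕ}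
    {m : ℕ → ℕ → ℕ → ℕ} {k : ℕ} {β : ℝ} {ψ : ∀ i, ↥(B k i) → ℝ}
    (hψnn : ∀ i v, 0 ≤ ψ i v) (n : ℕ) (p : ℕ × ℕ) :
    0 ≤ Fraw B M m W k β ψ n p := by
  unfold Fraw
  split
  · exact ff_nonneg hψnn _ _
  · split
    · exact hψnn _ _
    · exact le_refl 0

end Stmt8

/-- Lemma 4.6, second item: for `β ∈ I_k` every nonzero `ψ ∈ lim_j A^{(k,j)}` has
a minimal extension `ψ̄ ∈ lim_j A^(j)(β)` which vanishes outside `Br^0 ∪ Br^k`. -/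
theorem stmt_8
    (B : ℕ → ℕ → Finset ℕ) (M : ℕ → ℕ → ℕ → ℕ → ℕ) (v0k : ℕ → ℕ)
    (W : ℕ → ℕ) (m : ℕ → ℕ → ℕ → ℕ) (s t : ℕ → ℕ → ℝ) (I : ℕ → Set ℝ)
    (hBne : ∀ k i, (B k i).Nonempty)
    (hB0 : ∀ k, B k 0 = {v0k k})
    (hI : ∀ k, Convex ℝ (I k))
    (hM : ∀ k i x, x ∈ B k i → ∃ y ∈ B k (i+1), 0 < M k i x y)
    (hNpos : ∀ k i x, x ∈ B k i → 0 < Ncnt B M v0k k i x)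
    (hW : ∀ j, W j ∈ B 0 j) (hW0 : W 0 = v0k 0)
    (hspos : ∀ k j, 1 ≤ k → 1 ≤ j → 0 < s k j)
    (htpos : ∀ k j, 1 ≤ k → 1 ≤ j → 0 < t k j)
    (hst : ∀ k, 1 ≤ k → ∀ β : ℝ,
      ((Summable fun j : ℕ => s k (j+1) * Real.exp (((j : ℝ)+1) * β)) ∧
        (Summable fun j : ℕ => t k (j+1) * Real.exp (-(((j : ℝ)+1) * β)))) ↔ β ∈ I k)
    (hm1 : ∀ k, 1 ≤ k → m k 0 (v0k k) = 1)
    (hmpos : ∀ k i u, u ∈ B k i → 0 < m k i u)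
    (hmt : ∀ k j u, u ∈ B (k+1) (2*j+2) →
      (1/2) * (t (k+1) (j+1) * Ncnt B M v0k (k+1) (2*j+2) u
          / Ncnt B M v0k 0 (k+2*j+2) (W (k+2*j+2))) ≤ (m (k+1) (2*j+2) u : ℝ) ∧
      (m (k+1) (2*j+2) u : ℝ) ≤ t (k+1) (j+1) * Ncnt B M v0k (k+1) (2*j+2) u
          / Ncnt B M v0k 0 (k+2*j+2) (W (k+2*j+2)))
    (hms : ∀ k j u, u ∈ B (k+1) (2*j+1) →
      (1/2) * (s (k+1) (j+1) * Ncnt B M v0k (k+1) (2*j+1) u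
          / Ncnt B M v0k 0 (k+2*j+1) (W (k+2*j+1))) ≤ (m (k+1) (2*j+1) u : ℝ) ∧
      (m (k+1) (2*j+1) u : ℝ) ≤ s (k+1) (j+1) * Ncnt B M v0k (k+1) (2*j+1) u
          / Ncnt B M v0k 0 (k+2*j+1) (W (k+2*j+1)))
    (k : ℕ) (hk : 1 ≤ k) (β : ℝ) (hβ : β ∈ I k)
    (ψ : ∀ i, ↥(B k i) → ℝ)
    (hψ : ψ ∈ InvLimit (CompMat B M k)) (hψ0 : ψ ≠ 0) :
    ∃ ψb ∈ InvLimit (GAmat B M m W β),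
      (∀ (i u : ℕ) (hu : u ∈ B k i) (p : ↥(GV B (k+i))),
        p.val = (k, u) → ψb (k+i) p = ψ i ⟨u, hu⟩) ∧
      (∀ (n : ℕ) (p : ↥(GV B n)), p.val.1 ≠ 0 → p.val.1 ≠ k → ψb n p = 0) ∧
      (∀ φ ∈ InvLimit (GAmat B M m W β),
        (∀ (i u : ℕ) (hu : u ∈ B k i) (p : ↥(GV B (k+i))),
          p.val = (k, u) → ψ i ⟨u, hu⟩ ≤ φ (k+i) p) →
        ∀ (n : ℕ) (p : ↥(GV B n)), ψb n p ≤ φ n p) := by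
  classical
  obtain ⟨k₀, rfl⟩ : ∃ k₀, k = k₀+1 := ⟨k-1, by omega⟩
  obtain ⟨hψnn, hψrec⟩ := hψ
  have hv : v0k (k₀+1) ∈ B (k₀+1) 0 := by
    rw [hB0]; exact Finset.mem_singleton_self _
  set Ψ : ℝ := ψ 0 ⟨v0k (k₀+1), hv⟩ with hΨ
  have SN : ∀ i, ∑ u ∈ (B (k₀+1) i).attach,
      Ncnt B M v0k (k₀+1) i u.val * ψ i u = Ψ :=
    Stmt8.sum_N_psi hv (hB0 (k₀+1)) hψrec
  obtain ⟨hs, ht⟩ := (hst (k₀+1) hk β).2 hβ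
  set g : ℕ → ℝ := fun i => Real.exp (-β * kappa (i+1)) *
      (if Even (i+1) then t (k₀+1) ((i+1)/2) else s (k₀+1) ((i+1)/2+1)) * Ψ with hgdef
  have hg : Summable g := Stmt8.maj_summable Ψ hs ht
  have hNpos' : ∀ i x, x ∈ B 0 i → 0 < Ncnt B M v0k 0 i x := fun i x h => hNpos 0 i x h
  have hccb : ∀ i, Ncnt B M v0k 0 ((k₀+1)+i) (W ((k₀+1)+i))
      * Stmt8.cc B m (k₀+1) β ψ ((k₀+1)+i+1) ≤ g i :=
    fun i => Stmt8.cc_bound hψnn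
      (fun j u hu => (hmt k₀ j u hu).2) (fun j u hu => (hms k₀ j u hu).2)
      SN i (hNpos 0 _ _ (hW _))
  refine ⟨fun n p => Stmt8.Fraw B M m W (k₀+1) β ψ n p.val, ⟨?_, ?_⟩, ?_, ?_, ?_⟩
  · -- nonneg
    exact fun n p => Stmt8.Fraw_nonneg hψnn n p.val
  · -- recursion
    intro n p
    have e : ∑ w : ↥(GV B (n+1)), GAmat B M m W β n p w
          * Stmt8.Fraw B M m W (k₀+1) β ψ (n+1) w.val
        = ∑ q ∈ GV B (n+1), GAraw M m W β n p.val q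
          * Stmt8.Fraw B M m W (k₀+1) β ψ (n+1) q := by
      rw [Stmt8.sum_coe (GV B (n+1)) (fun w => GAmat B M m W β n p w
        * Stmt8.Fraw B M m W (k₀+1) β ψ (n+1) w.val)]
      apply Finset.sum_congr rfl
      intro q hq
      rw [dif_pos hq]
      rfl
    rw [e]
    exact Stmt8.Fraw_rec hk hW hNpos' hψnn hψrec hccb hg p.2
  · -- (a) agreement on Br^k
    intro i u hu p hp
    have hu' : u ∈ B (k₀+1) ((k₀+1)+i-(k₀+1)) := by
      rw [show (k₀+1)+i-(k₀+1) = i by omega]; exact hu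
    show Stmt8.Fraw B M m W (k₀+1) β ψ ((k₀+1)+i) p.val = _
    rw [hp, Stmt8.Fraw_eval_k hk (by omega) hu']
    exact Stmt8.psi_congr ψ (by omega) hu' hu
  · -- (b) vanishing off Br^0 ∪ Br^k
    rintro n ⟨⟨a, u⟩, hmem⟩ hp1 hp2
    exact Stmt8.Fraw_eval_ne hp1 hp2 n u
  · -- (c) minimality
    rintro φ ⟨hφnn, hφrec⟩ hφge n ⟨⟨a, u⟩, hmem⟩
    have hφψ : ∀ (n' : ℕ) (q : ↥(GV B n')), q.val.1 = k₀+1 → k₀+1 ≤ n' →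
        ∀ (hu : q.val.2 ∈ B (k₀+1) (n'-(k₀+1))),
          ψ (n'-(k₀+1)) ⟨q.val.2, hu⟩ ≤ φ n' q := by
      intro n' q hq1 hkn hu
      obtain ⟨i, rfl⟩ : ∃ i, n' = (k₀+1)+i := ⟨n'-(k₀+1), by omega⟩
      have hu' : q.val.2 ∈ B (k₀+1) i := by
        have hu2 := hu
        rwa [show (k₀+1)+i-(k₀+1) = i by omega] at hu2
      have hq : q.val = (k₀+1, q.val.2) := Prod.ext hq1 rfl
      have := hφge i q.val.2 hu' q hq
      refine le_trans (le_of_eq ?_) this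
      exact Stmt8.psi_congr ψ (by omega) hu hu'
    rcases Stmt8.mem_GV.1 hmem with ⟨h0, hx⟩ | ⟨h1, h2, h3⟩
    · simp only at h0 hx
      subst h0
      exact Stmt8.ff_min hk hW hNpos' hψnn hccb hg φ hφnn hφrec hφψ hx hmem
    · simp only at h1 h2 h3
      by_cases hak : a = k₀+1
      · subst hak
        show Stmt8.Fraw B M m W (k₀+1) β ψ n (k₀+1,u) ≤ _
        rw [Stmt8.Fraw_eval_k h1 h2 h3]
        exact hφψ n ⟨(k₀+1,u),hmem⟩ rfl h2 h3
      · show Stmt8.Fraw B M m W (k₀+1) β ψ n (a,u) ≤ _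
        rw [Stmt8.Fraw_eval_ne (by omega) hak]
        exact hφnn _ _
end
end

section
/- In the glued Bratteli diagram construction described below, fix k ≥ 1 and β ∈ I_k. For nonzero ψ ∈ lim_j A^{(k,j)} let ψ̄ be the minimal element of lim_j A^(j)(β) agreeing with ψ on the vertices of Br^k (i.e. the unique element satisfying ψ̄^{k+i}_u = ψ^i_u for all u ∈ Br^k_i, vanishing at all vertices outside Br^0 ∪ Br^k, and dominated by every φ ∈ lim_j A^(j)(β) with φ^{k+i}_u ≥ ψ^i_u for all u ∈ Br^k_i), and set 0̄ = 0. Then the map lim_j A^{(k,j)} ∋ ψ ↦ ψ̄ ∈ lim_j A^(j)(β) is injective, continuous, and affine (it preserves convex combinations). -/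
/-!
The minimal extension has an explicit formula: it is `ψ` on `Br^k`, `0` on the other components,
and at `v ∈ Br^0_n` it is `∑_d P(v, w_{n+d}) · S_{n+d}(ψ)`, where `P` counts paths in `Br^0` and
`S_ℓ(ψ)` is the mass `ψ` receives from `w_ℓ` along the additional arrows. Unrolling the recursion
of any `φ ∈ lim_j A^(j)(β)` that dominates `ψ` on `Br^k` bounds the partial sums of this series by
`φ`, so the formula is minimal, and it lies in the inverse limit once the series converges. For
`β ∈ I_k` the bounds on `m^k_i` give `N(0)_{w_ℓ} S_ℓ(ψ) ≤ c_ℓ ψ^0_{v_0^k}` with `c_ℓ` built from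
`s^k_j e^{jβ}` and `t^k_j e^{-jβ}`, hence summable. So `ψ̄` equals the formula, which is injective
and linear in `ψ`, and continuous by uniform convergence on sets of bounded total mass.
-/

open scoped BigOperators
noncomputable section

open Finset

section GluedDiagram

variable {B : ℕ → ℕ → Finset ℕ} {M : ℕ → ℕ → ℕ → ℕ → ℕ} {m : ℕ → ℕ → ℕ → ℕ} {W : ℕ → ℕ}
  {β : ℝ}

lemma mem_GV_iff {n : ℕ} {p : ℕ × ℕ} :
    p ∈ GV B n ↔ (p.1 = 0 ∧ p.2 ∈ B 0 n) ∨ (1 ≤ p.1 ∧ p.1 ≤ n ∧ p.2 ∈ B p.1 (n - p.1)) := by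
  obtain ⟨a, x⟩ := p
  simp only [GV, mem_union, mem_product, mem_singleton, mem_biUnion, mem_range]
  constructor
  · rintro (h | ⟨j, hj, rfl, hx⟩)
    · exact Or.inl h
    · exact Or.inr ⟨by omega, by omega, hx⟩
  · rintro (h | ⟨h1, h2, hx⟩)
    · exact Or.inl h
    · obtain ⟨j, rfl⟩ : ∃ j, a = j + 1 := ⟨a - 1, by omega⟩
      exact Or.inr ⟨j, by omega, rfl, hx⟩

lemma sum_GV_succ (n : ℕ) (f : ℕ × ℕ → ℝ) :
    ∑ q ∈ GV B (n+1), f q = ∑ w ∈ B 0 (n+1), f (0, w) +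
      ∑ j ∈ range (n+1), ∑ u ∈ B (j+1) (n - j), f (j+1, u) := by
  rw [GV, sum_union, sum_product, sum_singleton, sum_biUnion]
  · congr 1
    refine sum_congr rfl fun j _ => ?_
    rw [sum_product, sum_singleton, Nat.add_sub_add_right]
  · intro x _ y _ hxy
    refine disjoint_left.2 fun p hp hp' => ?_
    simp only [mem_product, mem_singleton] at hp hp'
    exact hxy (by omega)
  · refine disjoint_left.2 fun p hp hp' => ?_
    simp only [mem_product, mem_singleton, mem_biUnion, mem_range] at hp hp'
    omega

lemma sum_GAraw_mul_of_base (n v : ℕ) (f : ℕ × ℕ → ℝ) :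
    ∑ q ∈ GV B (n+1), GAraw M m W β n (0, v) q * f q =
      ∑ w ∈ B 0 (n+1), (M 0 n v w : ℝ) * f (0, w) +
      if v = W n then
        ∑ j ∈ range (n+1), ∑ u ∈ B (j+1) (n - j),
          (m (j+1) (n - j) u : ℝ) * Real.exp (-β * kappa (n - j)) * f (j+1, u)
      else 0 := by
  rw [sum_GV_succ]
  congr 1
  split_ifs with hv <;> simp [GAraw, hv]

lemma sum_GAraw_mul_of_comp {n a : ℕ} (x : ℕ) (ha : 1 ≤ a) (han : a ≤ n) (f : ℕ × ℕ → ℝ) :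
    ∑ q ∈ GV B (n+1), GAraw M m W β n (a, x) q * f q =
      ∑ u ∈ B a (n + 1 - a), (M a (n - a) x u : ℝ) * f (a, u) := by
  obtain ⟨a, rfl⟩ : ∃ a', a = a' + 1 := ⟨a - 1, by omega⟩
  rw [sum_GV_succ, sum_eq_single_of_mem a (mem_range.2 (by omega))]
  · simp [GAraw, Nat.add_sub_add_right]
  · intro j _ hj
    exact sum_eq_zero fun u _ => by simp [GAraw, show a ≠ j by omega]

def liftGV (B : ℕ → ℕ → Finset ℕ) (φ : ∀ n, ↥(GV B n) → ℝ) (n : ℕ) (q : ℕ × ℕ) : ℝ :=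
  if h : q ∈ GV B n then φ n ⟨q, h⟩ else 0

lemma liftGV_of_mem (φ : ∀ n, ↥(GV B n) → ℝ) {n : ℕ} {q : ℕ × ℕ} (h : q ∈ GV B n) :
    liftGV B φ n q = φ n ⟨q, h⟩ :=
  dif_pos h

lemma liftGV_nonneg {φ : ∀ n, ↥(GV B n) → ℝ} (hφ : φ ∈ InvLimit (GAmat B M m W β))
    (n : ℕ) (q : ℕ × ℕ) : 0 ≤ liftGV B φ n q := by
  unfold liftGV
  split
  exacts [hφ.1 _ _, le_rfl]

lemma eq_sum_GAraw_mul_liftGV {φ : ∀ n, ↥(GV B n) → ℝ}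
    (hφ : φ ∈ InvLimit (GAmat B M m W β)) (n : ℕ) (p : ↥(GV B n)) :
    φ n p = ∑ q ∈ GV B (n+1), GAraw M m W β n p q * liftGV B φ (n+1) q := by
  rw [hφ.2 n p, ← sum_coe_sort (GV B (n+1))]
  exact sum_congr rfl fun q _ => by rw [liftGV_of_mem φ q.2]; rfl

lemma mem_InvLimit_GAmat {f : ℕ → ℕ × ℕ → ℝ} (hf0 : ∀ n q, 0 ≤ f n q)
    (hf : ∀ n, ∀ p ∈ GV B n, f n p = ∑ q ∈ GV B (n+1), GAraw M m W β n p q * f (n+1) q) :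
    (fun n (p : ↥(GV B n)) => f n p) ∈ InvLimit (GAmat B M m W β) :=
  ⟨fun n p => hf0 n p, fun n p => by
    show f n p = _
    rw [hf n p p.2, ← sum_coe_sort (GV B (n+1))]
    rfl⟩

end GluedDiagram

lemma InvLimit.smul_add_smul_mem {L : ℕ → Type} [∀ n, Fintype (L n)]
    {A : ∀ n, L n → L (n+1) → ℝ} {ψ φ : ∀ n, L n → ℝ} (hψ : ψ ∈ InvLimit A)
    (hφ : φ ∈ InvLimit A) {c c' : ℝ} (hc : 0 ≤ c) (hc' : 0 ≤ c') :
    c • ψ + c' • φ ∈ InvLimit A := by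
  refine ⟨fun n v => ?_, fun n v => ?_⟩
  · have := hψ.1 n v
    have := hφ.1 n v
    simp only [Pi.add_apply, Pi.smul_apply, smul_eq_mul]
    positivity
  · simp only [Pi.add_apply, Pi.smul_apply, smul_eq_mul]
    rw [hψ.2 n v, hφ.2 n v, mul_sum, mul_sum, ← sum_add_distrib]
    exact sum_congr rfl fun w _ => by ring

section PathCounts

variable {B : ℕ → ℕ → Finset ℕ} {M : ℕ → ℕ → ℕ → ℕ → ℕ} {v0k W : ℕ → ℕ}

lemma exists_Ncnt_eq_natCast (k i x : ℕ) : ∃ q : ℕ, Ncnt B M v0k k i x = q := by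
  induction i generalizing x with
  | zero => exact ⟨if x = v0k k then 1 else 0, by simp [Ncnt]⟩
  | succ i ih =>
    choose f hf using ih
    exact ⟨∑ y ∈ B k i, f y * M k i y x, by simp [Ncnt, hf]⟩

lemma Ncnt_nonneg (k i x : ℕ) : 0 ≤ Ncnt B M v0k k i x := by
  obtain ⟨q, hq⟩ := exists_Ncnt_eq_natCast (B := B) (M := M) (v0k := v0k) k i x
  rw [hq]
  positivity

lemma one_le_Ncnt {k i x : ℕ} (h : 0 < Ncnt B M v0k k i x) : 1 ≤ Ncnt B M v0k k i x := by
  obtain ⟨q, hq⟩ := exists_Ncnt_eq_natCast (B := B) (M := M) (v0k := v0k) k i x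
  rw [hq] at h ⊢
  exact_mod_cast Nat.cast_pos.1 h

def pathsToW (B : ℕ → ℕ → Finset ℕ) (M : ℕ → ℕ → ℕ → ℕ → ℕ) (W : ℕ → ℕ) :
    ℕ → ℕ → ℕ → ℝ
  | n, v, 0 => if v = W n then 1 else 0
  | n, v, d+1 => ∑ w ∈ B 0 (n+1), (M 0 n v w : ℝ) * pathsToW B M W (n+1) w d

lemma pathsToW_nonneg (n v d : ℕ) : 0 ≤ pathsToW B M W n v d := by
  induction d generalizing n v with
  | zero => rw [pathsToW]; positivity
  | succ d ih => exact sum_nonneg fun w _ => mul_nonneg (by positivity) (ih _ _)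

lemma pathsToW_succ_mul (n v d : ℕ) (x : ℝ) :
    pathsToW B M W n v (d+1) * x =
      ∑ w ∈ B 0 (n+1), (M 0 n v w : ℝ) * (pathsToW B M W (n+1) w d * x) := by
  rw [pathsToW, sum_mul]
  exact sum_congr rfl fun w _ => by ring

lemma sum_Ncnt_mul_pathsToW (hW : ∀ j, W j ∈ B 0 j) (d n : ℕ) :
    ∑ v ∈ B 0 n, Ncnt B M v0k 0 n v * pathsToW B M W n v d = Ncnt B M v0k 0 (n+d) (W (n+d)) := by
  induction d generalizing n with
  | zero => simp [pathsToW, hW n]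
  | succ d ih =>
    rw [← add_assoc, add_right_comm, ← ih (n+1)]
    simp only [pathsToW, mul_sum]
    rw [sum_comm]
    refine sum_congr rfl fun w _ => ?_
    rw [Ncnt, sum_mul]
    exact sum_congr rfl fun v _ => by ring

lemma pathsToW_le_Ncnt (hW : ∀ j, W j ∈ B 0 j) {n v : ℕ} (hv : v ∈ B 0 n)
    (hN : 0 < Ncnt B M v0k 0 n v) (d : ℕ) :
    pathsToW B M W n v d ≤ Ncnt B M v0k 0 (n+d) (W (n+d)) :=
  calc pathsToW B M W n v d ≤ Ncnt B M v0k 0 n v * pathsToW B M W n v d :=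
        le_mul_of_one_le_left (pathsToW_nonneg n v d) (one_le_Ncnt hN)
    _ ≤ ∑ v ∈ B 0 n, Ncnt B M v0k 0 n v * pathsToW B M W n v d :=
        single_le_sum (fun w _ => mul_nonneg (Ncnt_nonneg 0 n w) (pathsToW_nonneg n w d)) hv
    _ = _ := sum_Ncnt_mul_pathsToW hW d n

end PathCounts

section Component

variable {B : ℕ → ℕ → Finset ℕ} {M : ℕ → ℕ → ℕ → ℕ → ℕ} {v0k : ℕ → ℕ} {k : ℕ}

def compVal (B : ℕ → ℕ → Finset ℕ) (k : ℕ) (ψ : ∀ i, ↥(B k i) → ℝ) (i u : ℕ) : ℝ :=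
  if h : u ∈ B k i then ψ i ⟨u, h⟩ else 0

lemma compVal_of_mem (ψ : ∀ i, ↥(B k i) → ℝ) {i u : ℕ} (hu : u ∈ B k i) :
    compVal B k ψ i u = ψ i ⟨u, hu⟩ :=
  dif_pos hu

lemma compVal_nonneg {ψ : ∀ i, ↥(B k i) → ℝ} (hψ : ψ ∈ InvLimit (CompMat B M k)) (i u : ℕ) :
    0 ≤ compVal B k ψ i u := by
  unfold compVal
  split
  exacts [hψ.1 i _, le_rfl]

lemma compVal_eq_sum {ψ : ∀ i, ↥(B k i) → ℝ} (hψ : ψ ∈ InvLimit (CompMat B M k))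
    {i u : ℕ} (hu : u ∈ B k i) :
    compVal B k ψ i u = ∑ u' ∈ B k (i+1), (M k i u u' : ℝ) * compVal B k ψ (i+1) u' := by
  rw [compVal_of_mem ψ hu, hψ.2 i, ← sum_coe_sort (B k (i+1))]
  exact sum_congr rfl fun u' _ => by rw [compVal_of_mem ψ u'.2]; rfl

lemma compVal_smul_add_smul (ψ φ : ∀ i, ↥(B k i) → ℝ) (c c' : ℝ) (i u : ℕ) :
    compVal B k (c • ψ + c' • φ) i u = c * compVal B k ψ i u + c' * compVal B k φ i u := by
  unfold compVal
  split <;> simp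

lemma continuous_compVal (i u : ℕ) : Continuous fun ψ : ∀ i, ↥(B k i) → ℝ => compVal B k ψ i u := by
  unfold compVal
  split
  exacts [(continuous_apply _).comp (continuous_apply _), continuous_const]

lemma sum_Ncnt_mul_compVal (h0 : B k 0 = {v0k k}) {ψ : ∀ i, ↥(B k i) → ℝ}
    (hψ : ψ ∈ InvLimit (CompMat B M k)) (i : ℕ) :
    ∑ u ∈ B k i, Ncnt B M v0k k i u * compVal B k ψ i u = compVal B k ψ 0 (v0k k) := by
  induction i with
  | zero => simp [h0, Ncnt]
  | succ i ih =>
    rw [← ih]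
    calc ∑ u' ∈ B k (i+1), Ncnt B M v0k k (i+1) u' * compVal B k ψ (i+1) u'
        = ∑ u ∈ B k i, ∑ u' ∈ B k (i+1),
            Ncnt B M v0k k i u * ((M k i u u' : ℝ) * compVal B k ψ (i+1) u') := by
          rw [sum_comm]
          refine sum_congr rfl fun u' _ => ?_
          rw [Ncnt, sum_mul]
          exact sum_congr rfl fun u _ => by ring
      _ = _ := sum_congr rfl fun u hu => by rw [compVal_eq_sum hψ hu, mul_sum]

end Component

section MinimalExtension

/-- The mass that `ψ̄` has to send along the additional arrows from `w_ℓ` into `Br^k`. -/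
def inflow (B : ℕ → ℕ → Finset ℕ) (m : ℕ → ℕ → ℕ → ℕ) (k : ℕ) (β : ℝ)
    (ψ : ∀ i, ↥(B k i) → ℝ) (ℓ : ℕ) : ℝ :=
  if k ≤ ℓ + 1 then
    ∑ u ∈ B k (ℓ + 1 - k),
      (m k (ℓ + 1 - k) u : ℝ) * Real.exp (-β * kappa (ℓ + 1 - k)) * compVal B k ψ (ℓ + 1 - k) u
  else 0

def baseVal (B : ℕ → ℕ → Finset ℕ) (M : ℕ → ℕ → ℕ → ℕ → ℕ) (W : ℕ → ℕ)
    (m : ℕ → ℕ → ℕ → ℕ) (k : ℕ) (β : ℝ) (ψ : ∀ i, ↥(B k i) → ℝ) (n v : ℕ) : ℝ :=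
  ∑' d, pathsToW B M W n v d * inflow B m k β ψ (n + d)

def minExtRaw (B : ℕ → ℕ → Finset ℕ) (M : ℕ → ℕ → ℕ → ℕ → ℕ) (W : ℕ → ℕ)
    (m : ℕ → ℕ → ℕ → ℕ) (k : ℕ) (β : ℝ) (ψ : ∀ i, ↥(B k i) → ℝ) (n : ℕ) (q : ℕ × ℕ) : ℝ :=
  if q.1 = k then compVal B k ψ (n - k) q.2
  else if q.1 = 0 then baseVal B M W m k β ψ n q.2
  else 0

def minExt (B : ℕ → ℕ → Finset ℕ) (M : ℕ → ℕ → ℕ → ℕ → ℕ) (W : ℕ → ℕ)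
    (m : ℕ → ℕ → ℕ → ℕ) (k : ℕ) (β : ℝ) (ψ : ∀ i, ↥(B k i) → ℝ) (n : ℕ) :
    ↥(GV B n) → ℝ :=
  fun p => minExtRaw B M W m k β ψ n p

variable {B : ℕ → ℕ → Finset ℕ} {M : ℕ → ℕ → ℕ → ℕ → ℕ} {W : ℕ → ℕ}
  {m : ℕ → ℕ → ℕ → ℕ} {k : ℕ} {β : ℝ}

lemma inflow_nonneg {ψ : ∀ i, ↥(B k i) → ℝ} (hψ : ψ ∈ InvLimit (CompMat B M k)) (ℓ : ℕ) :
    0 ≤ inflow B m k β ψ ℓ := by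
  unfold inflow
  split
  · exact sum_nonneg fun u _ => mul_nonneg (by positivity) (compVal_nonneg hψ _ _)
  · exact le_rfl

lemma inflow_smul_add_smul (ψ φ : ∀ i, ↥(B k i) → ℝ) (c c' : ℝ) (ℓ : ℕ) :
    inflow B m k β (c • ψ + c' • φ) ℓ = c * inflow B m k β ψ ℓ + c' * inflow B m k β φ ℓ := by
  unfold inflow
  split
  · simp only [compVal_smul_add_smul, mul_sum, ← sum_add_distrib]
    exact sum_congr rfl fun u _ => by ring
  · simp

lemma continuous_inflow (ℓ : ℕ) :
    Continuous fun ψ : ∀ i, ↥(B k i) → ℝ => inflow B m k β ψ ℓ := by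
  unfold inflow
  split
  · exact continuous_finsetSum _ fun u _ => continuous_const.mul (continuous_compVal _ _)
  · exact continuous_const

lemma baseVal_nonneg {ψ : ∀ i, ↥(B k i) → ℝ} (hψ : ψ ∈ InvLimit (CompMat B M k)) (n v : ℕ) :
    0 ≤ baseVal B M W m k β ψ n v :=
  tsum_nonneg fun d => mul_nonneg (pathsToW_nonneg n v d) (inflow_nonneg hψ _)

lemma minExtRaw_of_base (hk : 1 ≤ k) (ψ : ∀ i, ↥(B k i) → ℝ) (n v : ℕ) :
    minExtRaw B M W m k β ψ n (0, v) = baseVal B M W m k β ψ n v := by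
  simp [minExtRaw, show 0 ≠ k by omega]

lemma minExtRaw_of_comp (ψ : ∀ i, ↥(B k i) → ℝ) (n u : ℕ) :
    minExtRaw B M W m k β ψ n (k, u) = compVal B k ψ (n - k) u := by
  simp [minExtRaw]

lemma minExtRaw_of_ne {a : ℕ} (ha0 : a ≠ 0) (hak : a ≠ k) (ψ : ∀ i, ↥(B k i) → ℝ) (n u : ℕ) :
    minExtRaw B M W m k β ψ n (a, u) = 0 := by
  simp [minExtRaw, ha0, hak]

lemma minExtRaw_nonneg {ψ : ∀ i, ↥(B k i) → ℝ} (hψ : ψ ∈ InvLimit (CompMat B M k))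
    (n : ℕ) (q : ℕ × ℕ) : 0 ≤ minExtRaw B M W m k β ψ n q := by
  unfold minExtRaw
  split_ifs
  exacts [compVal_nonneg hψ _ _, baseVal_nonneg hψ _ _, le_rfl]

lemma minExt_apply_comp (ψ : ∀ i, ↥(B k i) → ℝ) {i u : ℕ} (hu : u ∈ B k i)
    (p : ↥(GV B (k+i))) (hp : p.val = (k, u)) : minExt B M W m k β ψ (k+i) p = ψ i ⟨u, hu⟩ := by
  rw [minExt, hp, minExtRaw_of_comp, Nat.add_sub_cancel_left, compVal_of_mem ψ hu]

lemma minExt_injective (hk : 1 ≤ k) : Function.Injective (minExt B M W m k β) := by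
  intro ψ φ h
  funext i u
  have hp : ((k, u.val) : ℕ × ℕ) ∈ GV B (k+i) :=
    mem_GV_iff.2 (Or.inr ⟨hk, by omega, by simp⟩)
  rw [← minExt_apply_comp ψ u.2 ⟨_, hp⟩ rfl, h, minExt_apply_comp φ u.2 ⟨_, hp⟩ rfl]

lemma sum_mul_minExtRaw_eq_inflow (hk : 1 ≤ k) (ψ : ∀ i, ↥(B k i) → ℝ) (n : ℕ) :
    ∑ j ∈ range (n+1), ∑ u ∈ B (j+1) (n - j),
      (m (j+1) (n - j) u : ℝ) * Real.exp (-β * kappa (n - j)) *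
        minExtRaw B M W m k β ψ (n+1) (j+1, u) = inflow B m k β ψ n := by
  obtain ⟨a, rfl⟩ : ∃ a, k = a + 1 := ⟨k - 1, by omega⟩
  unfold inflow
  split_ifs with hkn
  · rw [sum_eq_single_of_mem a (mem_range.2 (by omega))]
    · simp [minExtRaw_of_comp, Nat.add_sub_add_right]
    · intro j _ hj
      exact sum_eq_zero fun u _ => by rw [minExtRaw_of_ne (by omega) (by omega), mul_zero]
  · refine sum_eq_zero fun j hj => sum_eq_zero fun u _ => ?_
    rw [minExtRaw_of_ne (by omega) (by have := mem_range.1 hj; omega), mul_zero]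

lemma inflow_le_sum_mul (hk : 1 ≤ k) (ψ : ∀ i, ↥(B k i) → ℝ) (n : ℕ) {f : ℕ × ℕ → ℝ}
    (hf0 : ∀ q, 0 ≤ f q) (hf : k ≤ n + 1 → ∀ u, compVal B k ψ (n + 1 - k) u ≤ f (k, u)) :
    inflow B m k β ψ n ≤ ∑ j ∈ range (n+1), ∑ u ∈ B (j+1) (n - j),
      (m (j+1) (n - j) u : ℝ) * Real.exp (-β * kappa (n - j)) * f (j+1, u) := by
  have hsum_nonneg : ∀ j, 0 ≤ ∑ u ∈ B (j+1) (n - j),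
      (m (j+1) (n - j) u : ℝ) * Real.exp (-β * kappa (n - j)) * f (j+1, u) :=
    fun j => sum_nonneg fun u _ => mul_nonneg (by positivity) (hf0 _)
  obtain ⟨a, rfl⟩ : ∃ a, k = a + 1 := ⟨k - 1, by omega⟩
  unfold inflow
  split_ifs with hkn
  · refine le_trans ?_ (single_le_sum (fun j _ => hsum_nonneg j) (mem_range.2 (by omega : a < n+1)))
    simp only [Nat.add_sub_add_right]
    refine sum_le_sum fun u _ => mul_le_mul_of_nonneg_left ?_ (by positivity)
    simpa [Nat.add_sub_add_right] using hf hkn u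
  · exact sum_nonneg fun j _ => hsum_nonneg j

end MinimalExtension

section Minimality

variable {B : ℕ → ℕ → Finset ℕ} {M : ℕ → ℕ → ℕ → ℕ → ℕ} {W : ℕ → ℕ}
  {m : ℕ → ℕ → ℕ → ℕ} {k : ℕ} {β : ℝ}

lemma sum_range_pathsToW_mul_inflow_le (hk : 1 ≤ k) {ψ : ∀ i, ↥(B k i) → ℝ}
    {φ : ∀ n, ↥(GV B n) → ℝ} (hφ : φ ∈ InvLimit (GAmat B M m W β))
    (hdom : ∀ i u, compVal B k ψ i u ≤ liftGV B φ (k+i) (k, u)) (D : ℕ) :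
    ∀ n, ∀ v ∈ B 0 n,
      ∑ d ∈ range D, pathsToW B M W n v d * inflow B m k β ψ (n + d) ≤ liftGV B φ n (0, v) := by
  induction D with
  | zero => exact fun n v _ => by simpa using liftGV_nonneg hφ n (0, v)
  | succ D ih =>
    intro n v hv
    have hmem : ((0, v) : ℕ × ℕ) ∈ GV B n := mem_GV_iff.2 (Or.inl ⟨rfl, hv⟩)
    rw [liftGV_of_mem φ hmem, eq_sum_GAraw_mul_liftGV hφ, sum_GAraw_mul_of_base,
      sum_range_succ', add_zero]
    gcongr ?_ + ?_
    · simp only [pathsToW_succ_mul, ← add_assoc, add_right_comm n _ 1]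
      rw [sum_comm]
      refine sum_le_sum fun w hw => ?_
      rw [← mul_sum]
      exact mul_le_mul_of_nonneg_left (ih (n+1) w hw) (by positivity)
    · rw [pathsToW]
      split_ifs
      · rw [one_mul]
        refine inflow_le_sum_mul hk ψ n (liftGV_nonneg hφ _) fun hkn u => ?_
        simpa [Nat.add_sub_cancel' hkn] using hdom (n + 1 - k) u
      · rw [zero_mul]

lemma minExt_le (hk : 1 ≤ k) {ψ : ∀ i, ↥(B k i) → ℝ} (hψ : ψ ∈ InvLimit (CompMat B M k))
    {φ : ∀ n, ↥(GV B n) → ℝ} (hφ : φ ∈ InvLimit (GAmat B M m W β))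
    (hdom : ∀ (i u : ℕ) (hu : u ∈ B k i) (p : ↥(GV B (k+i))),
      p.val = (k, u) → ψ i ⟨u, hu⟩ ≤ φ (k+i) p) (n : ℕ) (p : ↥(GV B n)) :
    minExt B M W m k β ψ n p ≤ φ n p := by
  have hdom' : ∀ i u, compVal B k ψ i u ≤ liftGV B φ (k+i) (k, u) := by
    intro i u
    by_cases hu : u ∈ B k i
    · have hp : ((k, u) : ℕ × ℕ) ∈ GV B (k+i) :=
        mem_GV_iff.2 (Or.inr ⟨hk, by omega, by simpa using hu⟩)
      rw [compVal_of_mem ψ hu, liftGV_of_mem φ hp]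
      exact hdom i u hu _ rfl
    · rw [compVal, dif_neg hu]
      exact liftGV_nonneg hφ _ _
  obtain ⟨⟨a, x⟩, hp⟩ := p
  rcases mem_GV_iff.1 hp with ⟨rfl, hx⟩ | ⟨ha, han, hx⟩
  · rw [minExt, minExtRaw_of_base hk, ← liftGV_of_mem φ hp]
    exact Real.tsum_le_of_sum_range_le
      (fun d => mul_nonneg (pathsToW_nonneg n x d) (inflow_nonneg hψ _))
      fun D => sum_range_pathsToW_mul_inflow_le hk hφ hdom' D n x hx
  · by_cases hak : a = k
    · subst hak
      obtain ⟨i, rfl⟩ : ∃ i, n = a + i := ⟨n - a, by omega⟩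
      rw [minExt_apply_comp ψ (by simpa using hx) _ rfl]
      exact hdom i x _ _ rfl
    · rw [minExt, minExtRaw_of_ne (by omega) hak]
      exact hφ.1 n _

end Minimality

structure IsInflowMajorant (B : ℕ → ℕ → Finset ℕ) (M : ℕ → ℕ → ℕ → ℕ → ℕ) (W : ℕ → ℕ)
    (m : ℕ → ℕ → ℕ → ℕ) (v0k : ℕ → ℕ) (k : ℕ) (β : ℝ) (c : ℕ → ℝ) : Prop where
  summable : Summable c
  le : ∀ ψ ∈ InvLimit (CompMat B M k), ∀ n, ∀ v ∈ B 0 n, ∀ d,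
    pathsToW B M W n v d * inflow B m k β ψ (n + d) ≤ c (n + d) * compVal B k ψ 0 (v0k k)

section Majorant

variable {B : ℕ → ℕ → Finset ℕ} {M : ℕ → ℕ → ℕ → ℕ → ℕ} {W : ℕ → ℕ}
  {m : ℕ → ℕ → ℕ → ℕ} {v0k : ℕ → ℕ} {k : ℕ} {β : ℝ} {c : ℕ → ℝ}

lemma IsInflowMajorant.summable_baseVal (hc : IsInflowMajorant B M W m v0k k β c)
    {ψ : ∀ i, ↥(B k i) → ℝ} (hψ : ψ ∈ InvLimit (CompMat B M k)) {n v : ℕ} (hv : v ∈ B 0 n) :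
    Summable fun d => pathsToW B M W n v d * inflow B m k β ψ (n + d) := by
  refine Summable.of_nonneg_of_le
    (fun d => mul_nonneg (pathsToW_nonneg n v d) (inflow_nonneg hψ _)) (hc.le ψ hψ n v hv) ?_
  exact (((summable_nat_add_iff n).2 hc.summable).mul_right _).congr fun d => by rw [add_comm]

lemma IsInflowMajorant.baseVal_eq (hc : IsInflowMajorant B M W m v0k k β c)
    {ψ : ∀ i, ↥(B k i) → ℝ} (hψ : ψ ∈ InvLimit (CompMat B M k)) {n v : ℕ} (hv : v ∈ B 0 n) :
    baseVal B M W m k β ψ n v =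
      ∑ w ∈ B 0 (n+1), (M 0 n v w : ℝ) * baseVal B M W m k β ψ (n+1) w +
        if v = W n then inflow B m k β ψ n else 0 := by
  rw [baseVal, (hc.summable_baseVal hψ hv).tsum_eq_zero_add, add_comm, pathsToW, add_zero,
    ite_mul, one_mul, zero_mul]
  congr 1
  simp only [pathsToW_succ_mul, ← add_assoc, add_right_comm n _ 1]
  rw [Summable.tsum_finsetSum fun w hw => (hc.summable_baseVal hψ hw).mul_left _]
  exact sum_congr rfl fun w _ => by rw [tsum_mul_left, baseVal]

lemma IsInflowMajorant.minExt_mem (hk : 1 ≤ k) (hc : IsInflowMajorant B M W m v0k k β c)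
    {ψ : ∀ i, ↥(B k i) → ℝ} (hψ : ψ ∈ InvLimit (CompMat B M k)) :
    minExt B M W m k β ψ ∈ InvLimit (GAmat B M m W β) := by
  refine mem_InvLimit_GAmat (minExtRaw_nonneg hψ) fun n ⟨a, x⟩ hp => ?_
  rcases mem_GV_iff.1 hp with ⟨rfl, hx⟩ | ⟨ha, han, hx⟩
  · rw [sum_GAraw_mul_of_base, sum_mul_minExtRaw_eq_inflow hk, minExtRaw_of_base hk,
      hc.baseVal_eq hψ hx]
    simp only [minExtRaw_of_base hk]
  · rw [sum_GAraw_mul_of_comp x ha han]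
    by_cases hak : a = k
    · subst hak
      rw [minExtRaw_of_comp, compVal_eq_sum hψ hx]
      simp only [minExtRaw_of_comp, Nat.sub_add_comm han]
    · simp only [minExtRaw_of_ne (by omega : a ≠ 0) hak, mul_zero, sum_const_zero]

lemma IsInflowMajorant.eq_minExt (hk : 1 ≤ k) (hc : IsInflowMajorant B M W m v0k k β c)
    {ψ : ∀ i, ↥(B k i) → ℝ} (hψ : ψ ∈ InvLimit (CompMat B M k))
    {φ : ∀ n, ↥(GV B n) → ℝ} (hφ : φ ∈ InvLimit (GAmat B M m W β))
    (hagree : ∀ (i u : ℕ) (hu : u ∈ B k i) (p : ↥(GV B (k+i))),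
      p.val = (k, u) → φ (k+i) p = ψ i ⟨u, hu⟩)
    (hmin : ∀ φ' ∈ InvLimit (GAmat B M m W β),
      (∀ (i u : ℕ) (hu : u ∈ B k i) (p : ↥(GV B (k+i))),
        p.val = (k, u) → ψ i ⟨u, hu⟩ ≤ φ' (k+i) p) →
      ∀ (n : ℕ) (p : ↥(GV B n)), φ n p ≤ φ' n p) :
    φ = minExt B M W m k β ψ :=
  funext fun n => funext fun p => le_antisymm
    (hmin _ (hc.minExt_mem hk hψ)
      (fun _ _ hu p hp => (minExt_apply_comp ψ hu p hp).ge) n p)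
    (minExt_le hk hψ hφ (fun i u hu p hp => (hagree i u hu p hp).ge) n p)

lemma IsInflowMajorant.minExt_smul_add_smul (hk : 1 ≤ k)
    (hc : IsInflowMajorant B M W m v0k k β c) {ψ φ : ∀ i, ↥(B k i) → ℝ}
    (hψ : ψ ∈ InvLimit (CompMat B M k)) (hφ : φ ∈ InvLimit (CompMat B M k)) (a b : ℝ) :
    minExt B M W m k β (a • ψ + b • φ) =
      a • minExt B M W m k β ψ + b • minExt B M W m k β φ := by
  funext n ⟨⟨i, x⟩, hp⟩
  simp only [Pi.add_apply, Pi.smul_apply, smul_eq_mul, minExt]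
  rcases mem_GV_iff.1 hp with ⟨rfl, hx⟩ | ⟨ha, -, -⟩
  · simp only [minExtRaw_of_base hk, baseVal, inflow_smul_add_smul, mul_add, mul_left_comm _ a,
      mul_left_comm _ b]
    rw [(((hc.summable_baseVal hψ hx).mul_left a)).tsum_add
      ((hc.summable_baseVal hφ hx).mul_left b), tsum_mul_left, tsum_mul_left]
  · by_cases hik : i = k
    · subst hik
      simp only [minExtRaw_of_comp, compVal_smul_add_smul]
    · simp [minExtRaw_of_ne (by omega : i ≠ 0) hik]

lemma IsInflowMajorant.continuousOn_baseVal (hc : IsInflowMajorant B M W m v0k k β c)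
    {n v : ℕ} (hv : v ∈ B 0 n) :
    ContinuousOn (fun ψ => baseVal B M W m k β ψ n v) (InvLimit (CompMat B M k)) := by
  intro ψ₀ hψ₀
  set R := compVal B k ψ₀ 0 (v0k k) + 1
  set U := {ψ : ∀ i, ↥(B k i) → ℝ | compVal B k ψ 0 (v0k k) < R}
  have hU : IsOpen U := isOpen_lt (continuous_compVal 0 _) continuous_const
  have hψ₀U : ψ₀ ∈ U := show compVal B k ψ₀ 0 (v0k k) < R from lt_add_one _
  -- on the set where the total mass is below `R`, the series is dominated by `|c| R`
  have hcont : ContinuousOn (fun ψ => baseVal B M W m k β ψ n v)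
      (InvLimit (CompMat B M k) ∩ U) := by
    refine continuousOn_tsum (u := fun d => |c (n + d)| * R)
      (fun d => (continuous_const.mul (continuous_inflow _)).continuousOn) ?_ ?_
    · exact (((summable_nat_add_iff n).2 hc.summable.abs).mul_right R).congr
        fun d => by rw [add_comm]
    · rintro d ψ ⟨hψ, hψU⟩
      have hmass := compVal_nonneg hψ 0 (v0k k)
      rw [Real.norm_of_nonneg (mul_nonneg (pathsToW_nonneg n v d) (inflow_nonneg hψ _))]
      calc _ ≤ c (n + d) * compVal B k ψ 0 (v0k k) := hc.le ψ hψ n v hv d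
        _ ≤ |c (n + d)| * compVal B k ψ 0 (v0k k) :=
          mul_le_mul_of_nonneg_right (le_abs_self _) hmass
        _ ≤ |c (n + d)| * R := mul_le_mul_of_nonneg_left (le_of_lt hψU) (abs_nonneg _)
  exact (hcont.continuousWithinAt ⟨hψ₀, hψ₀U⟩).mono_of_mem_nhdsWithin
    (inter_mem_nhdsWithin _ (hU.mem_nhds hψ₀U))

lemma IsInflowMajorant.continuousOn_minExt (hk : 1 ≤ k)
    (hc : IsInflowMajorant B M W m v0k k β c) :
    ContinuousOn (minExt B M W m k β) (InvLimit (CompMat B M k)) := by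
  refine continuousOn_pi.2 fun n => continuousOn_pi.2 fun ⟨⟨a, x⟩, hp⟩ => ?_
  simp only [minExt]
  rcases mem_GV_iff.1 hp with ⟨rfl, hx⟩ | ⟨ha, -, -⟩
  · simp only [minExtRaw_of_base hk]
    exact hc.continuousOn_baseVal hx
  · by_cases hak : a = k
    · subst hak
      simp only [minExtRaw_of_comp]
      exact (continuous_compVal _ _).continuousOn
    · simp only [minExtRaw_of_ne (by omega : a ≠ 0) hak]
      exact continuousOn_const

end Majorant

lemma kappa_two_mul (j : ℕ) : kappa (2 * j) = j := by
  simp [kappa]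

lemma kappa_two_mul_add_one (j : ℕ) : kappa (2 * j + 1) = -j := by
  simp [kappa, show (2 * j + 1) / 2 = j by omega]

section GluedMajorant

/-- The choice of the `m^k_i` gives `N(0)_{w_{k+i-1}} m^k_i(u) ≤ massRate k i · N(k)_u`. -/
def massRate (B : ℕ → ℕ → Finset ℕ) (M : ℕ → ℕ → ℕ → ℕ → ℕ) (v0k W : ℕ → ℕ)
    (s t : ℕ → ℕ → ℝ) (k i : ℕ) : ℝ :=
  if i = 0 then Ncnt B M v0k 0 (k - 1) (W (k - 1))
  else if Even i then t k (i / 2) else s k (i / 2 + 1)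

def inflowMajorant (B : ℕ → ℕ → Finset ℕ) (M : ℕ → ℕ → ℕ → ℕ → ℕ) (v0k W : ℕ → ℕ)
    (s t : ℕ → ℕ → ℝ) (k : ℕ) (β : ℝ) (ℓ : ℕ) : ℝ :=
  if k ≤ ℓ + 1 then
    massRate B M v0k W s t k (ℓ + 1 - k) * Real.exp (-β * kappa (ℓ + 1 - k))
  else 0

variable {B : ℕ → ℕ → Finset ℕ} {M : ℕ → ℕ → ℕ → ℕ → ℕ} {v0k W : ℕ → ℕ}
  {m : ℕ → ℕ → ℕ → ℕ} {s t : ℕ → ℕ → ℝ} {k : ℕ} {β : ℝ}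

lemma massRate_two_mul_add_two (k j : ℕ) :
    massRate B M v0k W s t k (2 * j + 2) = t k (j + 1) := by
  simp [massRate, show Even (2 * j + 2) from ⟨j + 1, by ring⟩,
    show (2 * j + 2) / 2 = j + 1 by omega]

lemma massRate_two_mul_add_one (k j : ℕ) :
    massRate B M v0k W s t k (2 * j + 1) = s k (j + 1) := by
  simp [massRate, show (2 * j + 1) / 2 = j by omega]

lemma Ncnt_mul_le_massRate_mul_Ncnt (hk : 1 ≤ k) (hB0 : B k 0 = {v0k k})
    (hm1 : m k 0 (v0k k) = 1) (hNW : ∀ ℓ, 0 < Ncnt B M v0k 0 ℓ (W ℓ))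
    (hmt : ∀ k j u, u ∈ B (k+1) (2*j+2) →
      (1/2) * (t (k+1) (j+1) * Ncnt B M v0k (k+1) (2*j+2) u
          / Ncnt B M v0k 0 (k+2*j+2) (W (k+2*j+2))) ≤ (m (k+1) (2*j+2) u : ℝ) ∧
      (m (k+1) (2*j+2) u : ℝ) ≤ t (k+1) (j+1) * Ncnt B M v0k (k+1) (2*j+2) u
          / Ncnt B M v0k 0 (k+2*j+2) (W (k+2*j+2)))
    (hms : ∀ k j u, u ∈ B (k+1) (2*j+1) →
      (1/2) * (s (k+1) (j+1) * Ncnt B M v0k (k+1) (2*j+1) u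
          / Ncnt B M v0k 0 (k+2*j+1) (W (k+2*j+1))) ≤ (m (k+1) (2*j+1) u : ℝ) ∧
      (m (k+1) (2*j+1) u : ℝ) ≤ s (k+1) (j+1) * Ncnt B M v0k (k+1) (2*j+1) u
          / Ncnt B M v0k 0 (k+2*j+1) (W (k+2*j+1)))
    {i u : ℕ} (hu : u ∈ B k i) :
    Ncnt B M v0k 0 (k - 1 + i) (W (k - 1 + i)) * m k i u ≤
      massRate B M v0k W s t k i * Ncnt B M v0k k i u := by
  obtain ⟨k, rfl⟩ : ∃ k', k = k' + 1 := ⟨k - 1, by omega⟩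
  rw [Nat.add_sub_cancel]
  obtain ⟨j, rfl | rfl⟩ := Nat.even_or_odd' i
  · rcases j with _ | j
    · rw [hB0, mem_singleton] at hu
      subst hu
      simp [massRate, hm1, Ncnt]
    · rw [show 2 * (j + 1) = 2 * j + 2 by ring] at hu ⊢
      have h := (hmt k j u hu).2
      rw [le_div_iff₀ (hNW _)] at h
      rw [← add_assoc, massRate_two_mul_add_two]
      linarith
  · have h := (hms k j u hu).2
    rw [le_div_iff₀ (hNW _)] at h
    rw [← add_assoc, massRate_two_mul_add_one]
    linarith

lemma Ncnt_mul_inflow_le (hk : 1 ≤ k) (hB0 : B k 0 = {v0k k})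
    (hrate : ∀ i, ∀ u ∈ B k i, Ncnt B M v0k 0 (k - 1 + i) (W (k - 1 + i)) * m k i u ≤
      massRate B M v0k W s t k i * Ncnt B M v0k k i u)
    {ψ : ∀ i, ↥(B k i) → ℝ} (hψ : ψ ∈ InvLimit (CompMat B M k)) (ℓ : ℕ) :
    Ncnt B M v0k 0 ℓ (W ℓ) * inflow B m k β ψ ℓ ≤
      inflowMajorant B M v0k W s t k β ℓ * compVal B k ψ 0 (v0k k) := by
  unfold inflow inflowMajorant
  split_ifs with hkℓ
  · obtain ⟨i, rfl⟩ : ∃ i, ℓ = k - 1 + i := ⟨ℓ + 1 - k, by omega⟩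
    rw [show k - 1 + i + 1 - k = i by omega, ← sum_Ncnt_mul_compVal hB0 hψ i, mul_sum, mul_sum]
    refine sum_le_sum fun u hu => ?_
    have hweight : 0 ≤ Real.exp (-β * kappa i) * compVal B k ψ i u :=
      mul_nonneg (Real.exp_pos _).le (compVal_nonneg hψ i u)
    calc _ = (Ncnt B M v0k 0 (k - 1 + i) (W (k - 1 + i)) * m k i u) *
            (Real.exp (-β * kappa i) * compVal B k ψ i u) := by ring
      _ ≤ (massRate B M v0k W s t k i * Ncnt B M v0k k i u) *
            (Real.exp (-β * kappa i) * compVal B k ψ i u) :=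
          mul_le_mul_of_nonneg_right (hrate i u hu) hweight
      _ = _ := by ring
  · simp

lemma summable_inflowMajorant (hk : 1 ≤ k)
    (hs : Summable fun j : ℕ => s k (j+1) * Real.exp (((j : ℝ)+1) * β))
    (ht : Summable fun j : ℕ => t k (j+1) * Real.exp (-(((j : ℝ)+1) * β))) :
    Summable (inflowMajorant B M v0k W s t k β) := by
  rw [← summable_nat_add_iff (k - 1)]
  have hshift : ∀ i, inflowMajorant B M v0k W s t k β (i + (k - 1)) =
      massRate B M v0k W s t k i * Real.exp (-β * kappa i) := fun i => by
    rw [inflowMajorant, if_pos (by omega), show i + (k - 1) + 1 - k = i by omega]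
  simp only [hshift]
  refine Summable.even_add_odd ?_ ?_
  · rw [← summable_nat_add_iff 1]
    refine ht.congr fun j => ?_
    rw [show 2 * (j + 1) = 2 * j + 2 by ring, massRate_two_mul_add_two,
      show 2 * j + 2 = 2 * (j + 1) by ring, kappa_two_mul]
    push_cast
    ring_nf
  · refine (hs.mul_right (Real.exp (-β))).congr fun j => ?_
    rw [massRate_two_mul_add_one, kappa_two_mul_add_one, mul_assoc, ← Real.exp_add]
    ring_nf

lemma isInflowMajorant_inflowMajorant (hk : 1 ≤ k) (hB0 : B k 0 = {v0k k})
    (hW : ∀ j, W j ∈ B 0 j) (hN0 : ∀ n, ∀ v ∈ B 0 n, 0 < Ncnt B M v0k 0 n v)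
    (hrate : ∀ i, ∀ u ∈ B k i, Ncnt B M v0k 0 (k - 1 + i) (W (k - 1 + i)) * m k i u ≤
      massRate B M v0k W s t k i * Ncnt B M v0k k i u)
    (hs : Summable fun j : ℕ => s k (j+1) * Real.exp (((j : ℝ)+1) * β))
    (ht : Summable fun j : ℕ => t k (j+1) * Real.exp (-(((j : ℝ)+1) * β))) :
    IsInflowMajorant B M W m v0k k β (inflowMajorant B M v0k W s t k β) where
  summable := summable_inflowMajorant hk hs ht
  le ψ hψ n v hv d :=
    calc _ ≤ Ncnt B M v0k 0 (n + d) (W (n + d)) * inflow B m k β ψ (n + d) :=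
          mul_le_mul_of_nonneg_right (pathsToW_le_Ncnt hW hv (hN0 n v hv) d)
            (inflow_nonneg hψ _)
      _ ≤ _ := Ncnt_mul_inflow_le hk hB0 hrate hψ (n + d)

end GluedMajorant

theorem stmt_9_general
    (B : ℕ → ℕ → Finset ℕ) (M : ℕ → ℕ → ℕ → ℕ → ℕ) (v0k : ℕ → ℕ)
    (W : ℕ → ℕ) (m : ℕ → ℕ → ℕ → ℕ) (s t : ℕ → ℕ → ℝ) (I : ℕ → Set ℝ)
    (hB0 : ∀ k, B k 0 = {v0k k})
    (hNpos : ∀ k i x, x ∈ B k i → 0 < Ncnt B M v0k k i x)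
    (hW : ∀ j, W j ∈ B 0 j)
    (hst : ∀ k, 1 ≤ k → ∀ β : ℝ,
      ((Summable fun j : ℕ => s k (j+1) * Real.exp (((j : ℝ)+1) * β)) ∧
        (Summable fun j : ℕ => t k (j+1) * Real.exp (-(((j : ℝ)+1) * β)))) ↔ β ∈ I k)
    (hm1 : ∀ k, 1 ≤ k → m k 0 (v0k k) = 1)
    (hmt : ∀ k j u, u ∈ B (k+1) (2*j+2) →
      (1/2) * (t (k+1) (j+1) * Ncnt B M v0k (k+1) (2*j+2) u
          / Ncnt B M v0k 0 (k+2*j+2) (W (k+2*j+2))) ≤ (m (k+1) (2*j+2) u : ℝ) ∧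
      (m (k+1) (2*j+2) u : ℝ) ≤ t (k+1) (j+1) * Ncnt B M v0k (k+1) (2*j+2) u
          / Ncnt B M v0k 0 (k+2*j+2) (W (k+2*j+2)))
    (hms : ∀ k j u, u ∈ B (k+1) (2*j+1) →
      (1/2) * (s (k+1) (j+1) * Ncnt B M v0k (k+1) (2*j+1) u
          / Ncnt B M v0k 0 (k+2*j+1) (W (k+2*j+1))) ≤ (m (k+1) (2*j+1) u : ℝ) ∧
      (m (k+1) (2*j+1) u : ℝ) ≤ s (k+1) (j+1) * Ncnt B M v0k (k+1) (2*j+1) u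
          / Ncnt B M v0k 0 (k+2*j+1) (W (k+2*j+1)))
    (k : ℕ) (hk : 1 ≤ k) (β : ℝ) (hβ : β ∈ I k)
    (bar : (∀ i, ↥(B k i) → ℝ) → ∀ n, ↥(GV B n) → ℝ)
    (hbar : ∀ ψ ∈ InvLimit (CompMat B M k),
      bar ψ ∈ InvLimit (GAmat B M m W β) ∧
      (∀ (i u : ℕ) (hu : u ∈ B k i) (p : ↥(GV B (k+i))),
        p.val = (k, u) → bar ψ (k+i) p = ψ i ⟨u, hu⟩) ∧
      (∀ (n : ℕ) (p : ↥(GV B n)), p.val.1 ≠ 0 → p.val.1 ≠ k → bar ψ n p = 0) ∧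
      (∀ φ ∈ InvLimit (GAmat B M m W β),
        (∀ (i u : ℕ) (hu : u ∈ B k i) (p : ↥(GV B (k+i))),
          p.val = (k, u) → ψ i ⟨u, hu⟩ ≤ φ (k+i) p) →
        ∀ (n : ℕ) (p : ↥(GV B n)), bar ψ n p ≤ φ n p)) :
    Set.InjOn bar (InvLimit (CompMat B M k)) ∧
    ContinuousOn bar (InvLimit (CompMat B M k)) ∧
    (∀ ψ ∈ InvLimit (CompMat B M k), ∀ φ ∈ InvLimit (CompMat B M k),
      ∀ c : ℝ, 0 ≤ c → c ≤ 1 →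
        bar (c • ψ + (1 - c) • φ) = c • bar ψ + (1 - c) • bar φ) := by
  obtain ⟨hs, ht⟩ := (hst k hk β).2 hβ
  have hrate := fun i u (hu : u ∈ B k i) => Ncnt_mul_le_massRate_mul_Ncnt (s := s) (t := t)
    hk (hB0 k) (hm1 k hk) (fun ℓ => hNpos 0 ℓ _ (hW ℓ)) hmt hms hu
  have hc := isInflowMajorant_inflowMajorant hk (hB0 k) hW (hNpos 0) hrate hs ht
  have hbar_eq : ∀ ψ ∈ InvLimit (CompMat B M k), bar ψ = minExt B M W m k β ψ := fun ψ hψ =>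
    hc.eq_minExt hk hψ (hbar ψ hψ).1 (hbar ψ hψ).2.1 (hbar ψ hψ).2.2.2
  refine ⟨fun ψ hψ φ hφ h => ?_, ?_, fun ψ hψ φ hφ c hc0 hc1 => ?_⟩
  · exact minExt_injective hk ((hbar_eq ψ hψ).symm.trans (h.trans (hbar_eq φ hφ)))
  · exact (hc.continuousOn_minExt hk).congr hbar_eq
  · rw [hbar_eq _ (InvLimit.smul_add_smul_mem hψ hφ hc0 (sub_nonneg.2 hc1)), hbar_eq ψ hψ,
      hbar_eq φ hφ, hc.minExt_smul_add_smul hk hψ hφ]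

/-- Lemma 4.7: for `β ∈ I_k` the map `ψ ↦ ψ̄` (minimal extension) from
`lim_j A^{(k,j)}` to `lim_j A^(j)(β)` is injective, continuous and affine. -/
theorem stmt_9
    (B : ℕ → ℕ → Finset ℕ) (M : ℕ → ℕ → ℕ → ℕ → ℕ) (v0k : ℕ → ℕ)
    (W : ℕ → ℕ) (m : ℕ → ℕ → ℕ → ℕ) (s t : ℕ → ℕ → ℝ) (I : ℕ → Set ℝ)
    (hBne : ∀ k i, (B k i).Nonempty)
    (hB0 : ∀ k, B k 0 = {v0k k})
    (hI : ∀ k, Convex ℝ (I k))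
    (hM : ∀ k i x, x ∈ B k i → ∃ y ∈ B k (i+1), 0 < M k i x y)
    (hNpos : ∀ k i x, x ∈ B k i → 0 < Ncnt B M v0k k i x)
    (hW : ∀ j, W j ∈ B 0 j) (hW0 : W 0 = v0k 0)
    (hspos : ∀ k j, 1 ≤ k → 1 ≤ j → 0 < s k j)
    (htpos : ∀ k j, 1 ≤ k → 1 ≤ j → 0 < t k j)
    (hst : ∀ k, 1 ≤ k → ∀ β : ℝ,
      ((Summable fun j : ℕ => s k (j+1) * Real.exp (((j : ℝ)+1) * β)) ∧
        (Summable fun j : ℕ => t k (j+1) * Real.exp (-(((j : ℝ)+1) * β)))) ↔ β ∈ I k)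
    (hm1 : ∀ k, 1 ≤ k → m k 0 (v0k k) = 1)
    (hmpos : ∀ k i u, u ∈ B k i → 0 < m k i u)
    (hmt : ∀ k j u, u ∈ B (k+1) (2*j+2) →
      (1/2) * (t (k+1) (j+1) * Ncnt B M v0k (k+1) (2*j+2) u
          / Ncnt B M v0k 0 (k+2*j+2) (W (k+2*j+2))) ≤ (m (k+1) (2*j+2) u : ℝ) ∧
      (m (k+1) (2*j+2) u : ℝ) ≤ t (k+1) (j+1) * Ncnt B M v0k (k+1) (2*j+2) u
          / Ncnt B M v0k 0 (k+2*j+2) (W (k+2*j+2)))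
    (hms : ∀ k j u, u ∈ B (k+1) (2*j+1) →
      (1/2) * (s (k+1) (j+1) * Ncnt B M v0k (k+1) (2*j+1) u
          / Ncnt B M v0k 0 (k+2*j+1) (W (k+2*j+1))) ≤ (m (k+1) (2*j+1) u : ℝ) ∧
      (m (k+1) (2*j+1) u : ℝ) ≤ s (k+1) (j+1) * Ncnt B M v0k (k+1) (2*j+1) u
          / Ncnt B M v0k 0 (k+2*j+1) (W (k+2*j+1)))
    (k : ℕ) (hk : 1 ≤ k) (β : ℝ) (hβ : β ∈ I k)
    (bar : (∀ i, ↥(B k i) → ℝ) → ∀ n, ↥(GV B n) → ℝ)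
    (hbar : ∀ ψ ∈ InvLimit (CompMat B M k),
      bar ψ ∈ InvLimit (GAmat B M m W β) ∧
      (∀ (i u : ℕ) (hu : u ∈ B k i) (p : ↥(GV B (k+i))),
        p.val = (k, u) → bar ψ (k+i) p = ψ i ⟨u, hu⟩) ∧
      (∀ (n : ℕ) (p : ↥(GV B n)), p.val.1 ≠ 0 → p.val.1 ≠ k → bar ψ n p = 0) ∧
      (∀ φ ∈ InvLimit (GAmat B M m W β),
        (∀ (i u : ℕ) (hu : u ∈ B k i) (p : ↥(GV B (k+i))),
          p.val = (k, u) → ψ i ⟨u, hu⟩ ≤ φ (k+i) p) →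
        ∀ (n : ℕ) (p : ↥(GV B n)), bar ψ n p ≤ φ n p)) :
    Set.InjOn bar (InvLimit (CompMat B M k)) ∧
    ContinuousOn bar (InvLimit (CompMat B M k)) ∧
    (∀ ψ ∈ InvLimit (CompMat B M k), ∀ φ ∈ InvLimit (CompMat B M k),
      ∀ c : ℝ, 0 ≤ c → c ≤ 1 →
        bar (c • ψ + (1 - c) • φ) = c • bar ψ + (1 - c) • bar φ) :=
  stmt_9_general B M v0k W m s t I hB0 hNpos hW hst hm1 hmt hms k hk β hβ bar hbar
end
end

section
/- Let (Br_j)_{j≥0} be finite nonempty sets with Br_0 = {v_0} a singleton, let Br^(j) (j ≥ 1) be matrices with nonnegative integer entries indexed by Br_j × Br_{j-1} such that every column is nonzero (Br^(j)_{v,w} is the number of arrows from w ∈ Br_{j-1} to v ∈ Br_j in a Bratteli diagram Br), and let (d_i)_{i≥1} be natural numbers with d_i ≥ 2. Then there exist integers 0 = k_0 < k_1 < k_2 < ⋯ and matrices C^(j) (j ≥ 1) with strictly positive integer entries indexed by Br_j × Br_{j-1} such that: C^(j)_{v,w} > Br^(j)_{v,w} for all (v,w) ∈ Br_j × Br_{j-1}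 and all j; φ(C^(j) − Br^(j)) ≥ 1/4 for all j; and ∑_{w ∈ Br_j} (C^(j) C^(j-1) ⋯ C^(1))_{w,v_0} = ∏_{i=1}^{k_j} d_i for all j ≥ 1 (i.e. the total number of paths from v_0 to level j in the Bratteli diagram with multiplicity matrices C^(j) equals ∏_{i=1}^{k_j} d_i). -/
/-!
Group the factors `d_i` into consecutive blocks `[k_n, k_{n+1})` so long that their products
`c_n` exceed `|Br_{n+1}|` plus every column sum of `Br^(n)`. Each column of `Br^(n)` is then
topped up to column sum `c_n` by spreading the deficit as evenly as possible over the column: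
the added entries are positive and differ by at most one, so any two in a column are within a
factor `2` of each other, which forces `φ ≥ 1/4`. With all columns of `C^(n)` summing to `c_n`,
the number of paths to level `j` is `c_0 ⋯ c_{j-1} = ∏_{i < k_j} d_i`.
-/

open scoped BigOperators
noncomputable section

open Finset

theorem exists_sum_eq_and_div_le_le_div_add_one (ι : Type*) [Fintype ι] [Nonempty ι] (T : ℕ) :
    ∃ f : ι → ℕ, ∑ i, f i = T ∧ ∀ i, T / Fintype.card ι ≤ f i ∧ f i ≤ T / Fintype.card ι + 1 := by
  classical
  set n := Fintype.card ι
  obtain ⟨S, -, hS⟩ := exists_subset_card_eq (s := (univ : Finset ι)) (n := T % n)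
    ((Nat.mod_lt T Fintype.card_pos).le.trans_eq card_univ.symm)
  refine ⟨fun i => T / n + if i ∈ S then 1 else 0, ?_,
    fun i => ⟨by simp, by dsimp only; split_ifs <;> simp⟩⟩
  rw [sum_add_distrib, sum_const, card_univ, smul_eq_mul, sum_ite_mem, univ_inter, sum_const,
    smul_eq_mul, mul_one, hS, Nat.div_add_mod]

theorem exists_sum_eq_and_pos_and_le_two_mul {ι : Type*} [Fintype ι] [Nonempty ι] {T : ℕ}
    (hT : Fintype.card ι ≤ T) :
    ∃ f : ι → ℕ, ∑ i, f i = T ∧ (∀ i, 0 < f i) ∧ ∀ i j, f i ≤ 2 * f j := by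
  obtain ⟨f, hsum, hf⟩ := exists_sum_eq_and_div_le_le_div_add_one ι T
  have hq : 1 ≤ T / Fintype.card ι := (Nat.one_le_div_iff Fintype.card_pos).2 hT
  exact ⟨f, hsum, fun i => by linarith [hf i], fun i j => by linarith [hf i, hf j]⟩

theorem inv_sq_le_phi {X Y : Type} [Fintype X] [Fintype Y] [Nonempty X] [Nonempty Y]
    {B : X → Y → ℝ} (hB : ∀ x y, 0 < B x y) {c : ℝ} (hc : ∀ x x' y, B x' y ≤ c * B x y) :
    (c ^ 2)⁻¹ ≤ phi B := by
  obtain ⟨x₀⟩ := ‹Nonempty X›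
  obtain ⟨y₀⟩ := ‹Nonempty Y›
  have hc1 : 1 ≤ c := le_of_mul_le_mul_right (by simpa using hc x₀ x₀ y₀) (hB x₀ y₀)
  refine le_ciInf fun ⟨⟨x, x'⟩, y, y'⟩ => ?_
  rw [inv_le_iff_one_le_mul₀' (by positivity), mul_div_assoc',
    le_div_iff₀ (mul_pos (hB x' y) (hB x y')), one_mul]
  calc B x' y * B x y' ≤ (c * B x y) * (c * B x' y') :=
        mul_le_mul (hc x x' y) (hc x' x y') (hB x y').le (mul_nonneg (by linarith) (hB x y).le)
    _ = c ^ 2 * (B x y * B x' y') := by ring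

theorem sum_pathMat_eq_prod_of_sum_eq {L : ℕ → Type} [∀ n, Fintype (L n)]
    {A : ∀ n, L n → L (n+1) → ℝ} {c : ℕ → ℝ} (hA : ∀ n x, ∑ y, A n x y = c n) (v : L 0) :
    ∀ j, ∑ w, pathMat A j v w = ∏ n ∈ range j, c n
  | 0 => by classical simp [pathMat]
  | j + 1 => by
    simp only [pathMat]
    rw [sum_comm]
    simp only [← mul_sum, hA, ← sum_mul, sum_pathMat_eq_prod_of_sum_eq hA v j, prod_range_succ]

theorem Finset.prod_range_eq_prod_range_prod_Ico {M : Type*} [CommMonoid M] (f : ℕ → M)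
    {k : ℕ → ℕ} (hk : Monotone k) (h0 : k 0 = 0) :
    ∀ j, ∏ i ∈ range (k j), f i = ∏ n ∈ range j, ∏ i ∈ Ico (k n) (k (n+1)), f i
  | 0 => by simp [h0]
  | j + 1 => by
    rw [prod_range_succ, ← prod_range_eq_prod_range_prod_Ico f hk h0 j,
      prod_range_mul_prod_Ico f (hk j.le_succ)]

theorem exists_strictMono_lt_prod_Ico {d : ℕ → ℕ} (hd : ∀ i, 2 ≤ d i) (b : ℕ → ℕ) :
    ∃ k : ℕ → ℕ, k 0 = 0 ∧ StrictMono k ∧ ∀ n, b n < ∏ i ∈ Ico (k n) (k (n+1)), d i := by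
  let k n := ∑ m ∈ range n, (b m + 1)
  have hk n : k (n + 1) = k n + (b n + 1) := sum_range_succ _ n
  refine ⟨k, sum_range_zero _, strictMono_nat_of_lt_succ fun n => by rw [hk]; omega, fun n => ?_⟩
  calc b n < 2 ^ (b n + 1) := (Nat.lt_succ_self _).trans Nat.lt_two_pow_self
    _ ≤ ∏ i ∈ Ico (k n) (k (n + 1)), d i := by
      simpa only [Nat.card_Ico, hk, add_tsub_cancel_left] using
        pow_card_le_prod (Ico (k n) (k (n + 1))) d 2 fun i _ => hd i

theorem stmt_12_general {L : ℕ → Type} [∀ n, Fintype (L n)] [∀ n, Nonempty (L n)]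
    (v0 : L 0)
    (M : ∀ n, L (n+1) → L n → ℕ)
    (d : ℕ → ℕ) (hd : ∀ i, 2 ≤ d i) :
    ∃ (k : ℕ → ℕ) (C : ∀ n, L (n+1) → L n → ℕ),
      k 0 = 0 ∧ StrictMono k ∧
      (∀ n v w, M n v w < C n v w) ∧
      (∀ n, (1/4 : ℝ) ≤
        phi fun (v : L (n+1)) (w : L n) => (C n v w : ℝ) - (M n v w : ℝ)) ∧
      (∀ j : ℕ, 1 ≤ j →
        (∑ w : L j, pathMat (fun n (x : L n) (y : L (n+1)) => (C n y x : ℝ)) j v0 w)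
          = ∏ i ∈ Finset.range (k j), (d i : ℝ)) := by
  obtain ⟨k, hk0, hk, hkd⟩ := exists_strictMono_lt_prod_Ico hd fun n =>
    Fintype.card (L (n+1)) + univ.sup fun w : L n => ∑ v, M n v w
  let c n := ∏ i ∈ Ico (k n) (k (n+1)), d i
  have hc n (w : L n) : Fintype.card (L (n+1)) + ∑ v, M n v w < c n :=
    lt_of_le_of_lt (by gcongr; exact le_sup (f := fun w : L n => ∑ v, M n v w) (mem_univ w)) (hkd n)
  choose B hBsum hBpos hB2 using fun n (w : L n) =>
    exists_sum_eq_and_pos_and_le_two_mul (ι := L (n+1)) (T := c n - ∑ v, M n v w)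
      (by have := hc n w; omega)
  have hCsum n (w : L n) : ∑ v, (M n v w + B n w v) = c n := by
    rw [sum_add_distrib, hBsum]; have := hc n w; omega
  refine ⟨k, fun n v w => M n v w + B n w v, hk0, hk, fun n v w => by simpa using hBpos n w v,
    fun n => ?_, fun j _ => ?_⟩
  · simp only [Nat.cast_add, add_sub_cancel_left]
    convert inv_sq_le_phi (fun v w => Nat.cast_pos.2 (hBpos n w v)) (c := 2)
      fun v v' w => by exact_mod_cast hB2 n w v' v using 1
    norm_num
  · rw [prod_range_eq_prod_range_prod_Ico _ hk.monotone hk0]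
    exact sum_pathMat_eq_prod_of_sum_eq (fun n w => by exact_mod_cast hCsum n w) v0 j

/-- Lemma 5.1: given the multiplicity matrices `M` of a Bratteli diagram and
`d_i ≥ 2`, there are a Bratteli diagram on the same level sets with strictly
larger multiplicity matrices `C`, with `φ(C^{(j)} − M^{(j)}) ≥ 1/4`, whose total
number of paths to level `j` equals `∏_{i<k_j} d_i` (so the associated AF algebra
is the UHF algebra determined by `(d_i)`). -/
theorem stmt_12 {L : ℕ → Type} [∀ n, Fintype (L n)] [∀ n, Nonempty (L n)]
    (v0 : L 0) (hsing : ∀ v : L 0, v = v0)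
    (M : ∀ n, L (n+1) → L n → ℕ)
    (hM : ∀ n (w : L n), ∃ v : L (n+1), M n v w ≠ 0)
    (d : ℕ → ℕ) (hd : ∀ i, 2 ≤ d i) :
    ∃ (k : ℕ → ℕ) (C : ∀ n, L (n+1) → L n → ℕ),
      k 0 = 0 ∧ StrictMono k ∧
      (∀ n v w, M n v w < C n v w) ∧
      (∀ n, (1/4 : ℝ) ≤
        phi fun (v : L (n+1)) (w : L n) => (C n v w : ℝ) - (M n v w : ℝ)) ∧
      (∀ j : ℕ, 1 ≤ j →
        (∑ w : L j, pathMat (fun n (x : L n) (y : L (n+1)) => (C n y x : ℝ)) j v0 w)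
          = ∏ i ∈ Finset.range (k j), (d i : ℝ)) :=
  stmt_12_general v0 M d hd
end
end
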